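/- arXiv:2004.10189 — 10 statements merged into one kernel-verified Lean document; each statement's English description precedes it below -/
import Mathlib

section
/- Let p be a prime, let m, ℓ, n be nonnegative integers with m·(n+1) ≡ ℓ (mod p), and let h ∈ 𝔽_p[x] have degree r ≥ 1. Then for every integer k ≥ 1 one has the vector–matrix identity v^n_{k−1} · M^ℓ_{k−1} = (m·k·h_0) · v^n_k in 𝔽_p^r. -/
open Polynomial Finset

lemma convT2 (p k : ℕ) (a b : Polynomial (ZMod p)) :
    (a * b).coeff k = ∑ j ∈ range (k+1), a.coeff j * b.coeff (k - j) := by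
  rw [Polynomial.coeff_mul, Finset.Nat.sum_antidiagonal_eq_sum_range_succ_mk]

lemma keyT1 (p k' : ℕ) (h H : Polynomial (ZMod p)) :
    ∑ j ∈ range (k' + 2), (j : ZMod p) * h.coeff j * H.coeff (k' + 1 - j)
      = (derivative h * H).coeff k' := by
  rw [convT2, Finset.sum_range_succ' (fun j => (j : ZMod p) * h.coeff j * H.coeff (k' + 1 - j))]
  simp only [Nat.cast_zero, zero_mul, add_zero, coeff_derivative]
  apply Finset.sum_congr rfl
  intro i _
  have : k' + 1 - (i + 1) = k' - i := by omega
  rw [this]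
  push_cast
  ring

lemma key (p m ℓ n r k : ℕ) (hk : 1 ≤ k)
    (hc : ((m * (n + 1) : ℕ) : ZMod p) = (ℓ : ZMod p))
    (h : Polynomial (ZMod p)) (hdeg : h.natDegree = r) :
    ∑ s ∈ range r, (if s + 1 ≤ k then (h ^ n).coeff (k - (s + 1)) else 0)
        * (((ℓ * (s + 1) : ℕ) : ZMod p) - ((m * k : ℕ) : ZMod p)) * h.coeff (s + 1)
      = ((m * k : ℕ) : ZMod p) * h.coeff 0 * (h ^ n).coeff k := by
  set H := h ^ n with hH
  set f : ℕ → ZMod p := fun j =>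
    (if j ≤ k then H.coeff (k - j) else 0)
      * (((ℓ * j : ℕ) : ZMod p) - ((m * k : ℕ) : ZMod p)) * h.coeff j with hf
  have e1 : ∑ s ∈ range r, (if s + 1 ≤ k then H.coeff (k - (s + 1)) else 0)
        * (((ℓ * (s + 1) : ℕ) : ZMod p) - ((m * k : ℕ) : ZMod p)) * h.coeff (s + 1)
      = ∑ s ∈ range (r + k), f (s + 1) := by
    apply Finset.sum_subset (Finset.range_subset_range.2 (Nat.le_add_right r k))
    intro s _ hs
    simp only [Finset.mem_range, not_lt] at hs
    have : h.coeff (s + 1) = 0 :=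
      coeff_eq_zero_of_natDegree_lt (by omega)
    simp [hf, this]
  have e2 : ∑ j ∈ range (r + k + 1), f j = ∑ s ∈ range (r + k), f (s + 1) + f 0 :=
    Finset.sum_range_succ' f (r + k)
  have e3 : ∑ j ∈ range (k + 1), f j = ∑ j ∈ range (r + k + 1), f j := by
    apply Finset.sum_subset (Finset.range_subset_range.2 (by omega))
    intro j _ hj
    simp only [Finset.mem_range, not_lt] at hj
    have : ¬ j ≤ k := by omega
    simp [hf, this]
  have e4 : ∑ j ∈ range (k + 1), f j = 0 := by
    have expand : ∑ j ∈ range (k + 1), f j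
        = (ℓ : ZMod p) * (∑ j ∈ range (k + 1), (j : ZMod p) * h.coeff j * H.coeff (k - j))
          - ((m * k : ℕ) : ZMod p) * ((h * H).coeff k) := by
      rw [convT2, Finset.mul_sum, Finset.mul_sum, ← Finset.sum_sub_distrib]
      apply Finset.sum_congr rfl
      intro j hj
      simp only [Finset.mem_range] at hj
      have : j ≤ k := by omega
      simp only [hf, if_pos this]
      push_cast
      ring
    obtain ⟨k', rfl⟩ : ∃ k', k = k' + 1 := ⟨k - 1, by omega⟩
    rw [expand, keyT1]
    have hder : (derivative (h ^ (n + 1))).coeff k'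
        = ((n : ZMod p) + 1) * (derivative h * H).coeff k' := by
      rw [derivative_pow, Nat.add_sub_cancel, hH]
      push_cast
      rw [mul_assoc, coeff_C_mul, mul_comm (h ^ n) (derivative h)]
    have hder2 : (derivative (h ^ (n + 1))).coeff k'
        = (h ^ (n + 1)).coeff (k' + 1) * ((k' : ZMod p) + 1) := coeff_derivative _ _
    have hpow : h * H = h ^ (n + 1) := by rw [hH, pow_succ']
    have hl : (ℓ : ZMod p) = (m : ZMod p) * ((n : ZMod p) + 1) := by
      rw [← hc]; push_cast; ring
    rw [hpow, hl, mul_assoc, ← hder, hder2]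
    push_cast
    ring
  have hfz : f 0 = H.coeff k * (0 - ((m * k : ℕ) : ZMod p)) * h.coeff 0 := by
    simp [hf]
  rw [e1]
  have : ∑ s ∈ range (r + k), f (s + 1) = ∑ j ∈ range (r + k + 1), f j - f 0 := by
    rw [e2]; ring
  rw [this, ← e3, e4, hfz]
  ring



/-- The matrix `M^ℓ_{i−1}` (indexed here by `i ≥ 1`): the `r × r` matrix over `𝔽_p`
whose (1-indexed) `(s, s−1)` entry is `m·i·h_0` for `2 ≤ s ≤ r`, whose `(s, r)` entry is
`(ℓ·(r+1−s) − m·i)·h_{r+1−s}` for `1 ≤ s ≤ r`, and all of whose other entries are `0`.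
Indices below are 0-indexed. -/
noncomputable def Mmat (p m ℓ r : ℕ) (h : Polynomial (ZMod p)) (i : ℕ) :
    Matrix (Fin r) (Fin r) (ZMod p) :=
  Matrix.of fun s t =>
    (if (t : ℕ) + 1 = (s : ℕ) then ((m * i : ℕ) : ZMod p) * h.coeff 0 else 0) +
    (if (t : ℕ) = r - 1 then
      (((ℓ * (r - (s : ℕ)) : ℕ) : ZMod p) - ((m * i : ℕ) : ZMod p)) * h.coeff (r - (s : ℕ))
    else 0)

/-- The row vector `v^n_k = [h^n_{k−r+1}, …, h^n_k] ∈ 𝔽_p^r`, where `h^n_i` is the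
coefficient of `x^i` in `h(x)^n`, with coefficients at negative indices equal to `0`. -/
noncomputable def vvec (p r : ℕ) (h : Polynomial (ZMod p)) (n : ℕ) (k : ℤ) :
    Fin r → ZMod p :=
  fun t =>
    if 0 ≤ k - (r : ℤ) + 1 + ((t : ℕ) : ℤ) then
      (h ^ n).coeff (k - (r : ℤ) + 1 + ((t : ℕ) : ℤ)).toNat
    else 0

/-- Let `p` be prime, `m, ℓ, n` nonnegative with `m·(n+1) ≡ ℓ (mod p)`,
and let `h ∈ 𝔽_p[x]` have degree `r ≥ 1`.  For every `k ≥ 1` one has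
`v^n_{k−1} · M^ℓ_{k−1} = (m·k·h_0) · v^n_k` in `𝔽_p^r`. -/

theorem stmt2 (p : ℕ) (hp : p.Prime) (m ℓ n : ℕ)
    (hcong : m * (n + 1) ≡ ℓ [MOD p])
    (h : Polynomial (ZMod p)) (r : ℕ) (hdeg : h.natDegree = r) (hr : 1 ≤ r)
    (k : ℕ) (hk : 1 ≤ k) :
    Matrix.vecMul (vvec p r h n ((k : ℤ) - 1)) (Mmat p m ℓ r h k)
      = (((m * k : ℕ) : ZMod p) * h.coeff 0) • vvec p r h n (k : ℤ) := by
  have hc : ((m * (n + 1) : ℕ) : ZMod p) = (ℓ : ZMod p) :=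
    (ZMod.natCast_eq_natCast_iff _ _ _).2 hcong
  funext t
  simp only [Matrix.vecMul, dotProduct, Mmat, Matrix.of_apply, Pi.smul_apply,
    smul_eq_mul, vvec]
  by_cases ht : (t : ℕ) = r - 1
  · simp only [ht, if_pos rfl]
    have hno : ∀ s : Fin r, ¬ (r - 1 + 1 = (s : ℕ)) := fun s => by
      have := s.isLt; omega
    simp only [if_true, hno, if_false, zero_add]
    have hrk : 0 ≤ (k : ℤ) - r + 1 + ((r - 1 : ℕ) : ℤ) := by omega
    rw [if_pos hrk]
    have harg : ((k : ℤ) - r + 1 + ((r - 1 : ℕ) : ℤ)).toNat = k := by omega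
    rw [harg]
    rw [Fin.sum_univ_eq_sum_range (fun s : ℕ =>
      (if 0 ≤ (k : ℤ) - 1 - r + 1 + (s : ℤ) then
          (h ^ n).coeff ((k : ℤ) - 1 - r + 1 + (s : ℤ)).toNat else 0)
        * ((((ℓ * (r - s) : ℕ) : ZMod p) - ((m * k : ℕ) : ZMod p)) * h.coeff (r - s))) r]
    rw [← Finset.sum_range_reflect]
    rw [Finset.sum_congr rfl (fun j hj => ?_), key p m ℓ n r k hk hc h hdeg]
    simp only [Finset.mem_range] at hj
    have h1 : r - (r - 1 - j) = j + 1 := by omega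
    rw [h1, ← mul_assoc]
    congr 2
    by_cases hc2 : j + 1 ≤ k
    · rw [if_pos (by omega), if_pos hc2]
      congr 1
      omega
    · rw [if_neg (by omega), if_neg hc2]
  · have htlt : (t : ℕ) + 1 < r := by have := t.isLt; omega
    simp only [if_neg ht, add_zero]
    rw [Finset.sum_eq_single (⟨(t : ℕ) + 1, htlt⟩ : Fin r)]
    · rw [if_pos rfl]
      have harg : (k : ℤ) - 1 - r + 1 + (((⟨(t : ℕ) + 1, htlt⟩ : Fin r) : ℕ) : ℤ)
          = (k : ℤ) - r + 1 + ((t : ℕ) : ℤ) := by push_cast; ring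
      rw [harg]
      ring
    · intro b _ hb
      have hcond : ¬ ((t : ℕ) + 1 = (b : ℕ)) := fun hcond => hb (Fin.ext hcond.symm)
      rw [if_neg hcond, mul_zero]
    · intro habs
      exact absurd (Finset.mem_univ _) habs
end

section
/- Let p be a prime, let m, ℓ, n be nonnegative integers with m·(n+1) ≡ ℓ (mod p), and let h ∈ 𝔽_p[x] have degree r ≥ 1. Then for every integer s ≥ 0 one has ((m·h_0)^s · s!) · v^n_s = h_0^n · e_r · ∏_{i=0}^{s−1} M^ℓ_i in 𝔽_p^r, where s! is computed in 𝔽_p and the matrix product is taken in the order M^ℓ_0 M^ℓ_1 ⋯ M^ℓ_{s−1}. -/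
/-- The row vector `e_r = [0, …, 0, 1] ∈ 𝔽_p^r`. -/
noncomputable def erow (p r : ℕ) : Fin r → ZMod p :=
  fun t => if (t : ℕ) = r - 1 then 1 else 0

open Polynomial Finset in

lemma hident {R : Type*} [CommRing R] (h : Polynomial R) (n : ℕ) :
    h * derivative (h ^ n) = n • (h ^ n * derivative h) := by
  cases n with
  | zero => simp
  | succ n =>
    rw [derivative_pow_succ]
    simp [nsmul_eq_mul]
    ring

open Polynomial Finset in
lemma claimA {R : Type*} [CommRing R] (h : Polynomial R) (n s : ℕ) :
    ∑ j ∈ Finset.range (s+2),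
      (((n:R)+1) * (j:R) - ((s:R)+1)) * h.coeff j * (h^n).coeff (s+1-j) = 0 := by
  have H := congrArg (fun q : Polynomial R => q.coeff s) (hident h n)
  simp only [coeff_mul, coeff_smul, coeff_derivative, smul_eq_mul] at H
  rw [Finset.Nat.sum_antidiagonal_eq_sum_range_succ_mk,
      Finset.Nat.sum_antidiagonal_eq_sum_range_succ_mk] at H
  simp only [] at H
  have split : ∀ j ∈ Finset.range (s+2),
      (((n:R)+1) * (j:R) - ((s:R)+1)) * h.coeff j * (h^n).coeff (s+1-j)
      = (n:R) * ((j:R) * h.coeff j * (h^n).coeff (s+1-j))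
        - ((↑(s+1-j):R)) * h.coeff j * (h^n).coeff (s+1-j) := by
    intro j hj
    simp only [Finset.mem_range] at hj
    have hc : (↑(s+1-j):R) = (s:R)+1-(j:R) := by
      have h1 : s + 1 - j + j = s + 1 := by omega
      have := congrArg (fun z : ℕ => (z : R)) h1
      push_cast at this
      linear_combination this
    rw [hc]; ring
  rw [Finset.sum_congr rfl split, Finset.sum_sub_distrib, ← Finset.mul_sum]
  have e2 : ∑ j ∈ Finset.range (s+2), (↑(s+1-j):R) * h.coeff j * (h^n).coeff (s+1-j)
      = ∑ a ∈ Finset.range (s+1), h.coeff a * ((h^n).coeff (s-a+1) * ((↑(s-a):R)+1)) := by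
    rw [Finset.sum_range_succ]
    simp only [Nat.sub_self, Nat.cast_zero, zero_mul, add_zero]
    apply Finset.sum_congr rfl
    intro a ha
    simp only [Finset.mem_range] at ha
    have h1 : s + 1 - a = s - a + 1 := by omega
    rw [h1]; push_cast; ring
  have e1 : ∑ j ∈ Finset.range (s+2), (j:R) * h.coeff j * (h^n).coeff (s+1-j)
      = ∑ a ∈ Finset.range (s+1), (h^n).coeff a * (h.coeff (s-a+1) * ((↑(s-a):R)+1)) := by
    have refl := Finset.sum_range_reflect
      (fun j => (j:R) * h.coeff j * (h^n).coeff (s+1-j)) (s+2)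
    rw [← refl, Finset.sum_range_succ]
    have hlast : ((↑(s + 2 - 1 - (s+1)):R)) * h.coeff (s+2-1-(s+1)) *
        (h^n).coeff (s+1-(s+2-1-(s+1))) = 0 := by
      norm_num
    rw [hlast, add_zero]
    apply Finset.sum_congr rfl
    intro a ha
    simp only [Finset.mem_range] at ha
    have h1 : s + 2 - 1 - a = s - a + 1 := by omega
    have h2 : s + 1 - (s - a + 1) = a := by omega
    rw [h1, h2]
    push_cast; ring
  rw [e1, e2, H, nsmul_eq_mul]; ring

open Polynomial Finset in
lemma claimB {R : Type*} [CommRing R] (h : Polynomial R) (n s r : ℕ)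
    (hdeg : h.natDegree = r) :
    ∑ j ∈ Finset.range r, (((n:R)+1) * (↑(j+1):R) - ((s:R)+1)) * h.coeff (j+1) *
        (if j+1 ≤ s+1 then (h^n).coeff (s+1-(j+1)) else 0)
      = ((s:R)+1) * h.coeff 0 * (h^n).coeff (s+1) := by
  set T : ℕ → R := fun j => (((n:R)+1) * (j:R) - ((s:R)+1)) * h.coeff j *
      (if j ≤ s+1 then (h^n).coeff (s+1-j) else 0) with hT
  have hbig : ∀ N, s + 2 ≤ N → r + 1 ≤ N → (∑ j ∈ Finset.range N, T j = 0) := by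
    intro N hN hN'
    have : ∑ j ∈ Finset.range N, T j = ∑ j ∈ Finset.range (s+2), T j := by
      symm
      apply Finset.sum_subset (Finset.range_subset_range.2 hN)
      intro x hx hnx
      simp only [Finset.mem_range, not_lt] at hnx
      simp only [hT, if_neg (by omega : ¬ x ≤ s+1), mul_zero]
    rw [this, ← claimA h n s]
    apply Finset.sum_congr rfl
    intro j hj
    simp only [Finset.mem_range] at hj
    simp [hT, if_pos (by omega : j ≤ s+1)]
  have h1 : ∑ j ∈ Finset.range (r+1), T j = 0 := by
    have h2 : ∑ j ∈ Finset.range (r+s+2), T j = 0 := hbig _ (by omega) (by omega)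
    rw [← h2]
    apply Finset.sum_subset (Finset.range_subset_range.2 (by omega))
    intro x hx hnx
    simp only [Finset.mem_range, not_lt] at hnx
    have : h.coeff x = 0 := coeff_eq_zero_of_natDegree_lt (by omega)
    simp [hT, this]
  have h3 := Finset.sum_range_succ' T r
  rw [h1] at h3
  have hT0 : T 0 = -(((s:R)+1) * h.coeff 0 * (h^n).coeff (s+1)) := by
    simp [hT]; ring
  rw [hT0] at h3
  have h4 : ∑ j ∈ Finset.range r, T (j+1) = ((s:R)+1) * h.coeff 0 * (h^n).coeff (s+1) := by
    linear_combination -h3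
  rw [← h4]

open Polynomial Finset in
lemma stepLemma (p m ℓ n r : ℕ) (h : Polynomial (ZMod p)) (hdeg : h.natDegree = r) (hr : 1 ≤ r)
    (hl : (ℓ : ZMod p) = ((m * (n+1) : ℕ) : ZMod p)) (s : ℕ) :
    Matrix.vecMul (vvec p r h n (s : ℤ)) (Mmat p m ℓ r h (s+1))
      = (((m : ZMod p) * h.coeff 0) * ((s : ZMod p)+1)) • vvec p r h n ((s:ℤ)+1) := by
  funext t
  have hv : ∀ a : Fin r, Matrix.vecMul (vvec p r h n (s : ℤ)) (Mmat p m ℓ r h (s+1)) t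
      = ∑ a : Fin r, vvec p r h n (s : ℤ) a * Mmat p m ℓ r h (s+1) a t := by
    intro a; simp [Matrix.vecMul, dotProduct]
  rw [hv t]
  have hsplit : ∑ a : Fin r, vvec p r h n (s : ℤ) a * Mmat p m ℓ r h (s+1) a t
      = (∑ a : Fin r, vvec p r h n (s : ℤ) a *
          (if (t:ℕ) + 1 = (a:ℕ) then ((m * (s+1) : ℕ) : ZMod p) * h.coeff 0 else 0))
        + (∑ a : Fin r, vvec p r h n (s : ℤ) a *
          (if (t:ℕ) = r - 1 then
            ((((ℓ * (r - (a:ℕ)) : ℕ)) : ZMod p) - ((m * (s+1) : ℕ) : ZMod p)) * h.coeff (r - (a:ℕ))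
          else 0)) := by
    rw [← Finset.sum_add_distrib]
    apply Finset.sum_congr rfl
    intro a _
    rw [Mmat, Matrix.of_apply, mul_add]
  rw [hsplit]
  by_cases ht : (t : ℕ) = r - 1
  · -- last column
    have hfirst : ∑ a : Fin r, vvec p r h n (s:ℤ) a *
        (if (t:ℕ) + 1 = (a:ℕ) then ((m * (s+1) : ℕ) : ZMod p) * h.coeff 0 else 0) = 0 := by
      apply Finset.sum_eq_zero
      intro a _
      rw [if_neg (by have := a.isLt; omega), mul_zero]
    rw [hfirst, zero_add]
    simp only [if_pos ht]
    -- RHS value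
    have hrhs : vvec p r h n ((s:ℤ)+1) t = (h ^ n).coeff (s+1) := by
      simp only [vvec]
      rw [if_pos (by rw [ht]; push_cast; omega)]
      congr 1
      rw [ht]; push_cast; omega
    rw [Pi.smul_apply, smul_eq_mul, hrhs]
    -- LHS entries
    have hva : ∀ a : Fin r, vvec p r h n (s:ℤ) a
        = (if r - (a:ℕ) ≤ s+1 then (h ^ n).coeff (s+1-(r-(a:ℕ))) else 0) := by
      intro a
      have halt := a.isLt
      simp only [vvec]
      by_cases hc : r - (a:ℕ) ≤ s + 1
      · rw [if_pos (by push_cast; omega), if_pos hc]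
        congr 1
        push_cast; omega
      · rw [if_neg (by push_cast; omega), if_neg hc]
    simp only [hva, ← mul_assoc]
    -- turn into a range sum
    have e0 : ∑ a : Fin r, (if r - (a:ℕ) ≤ s+1 then (h ^ n).coeff (s+1-(r-(a:ℕ))) else 0) *
          ((((ℓ * (r - (a:ℕ)) : ℕ)) : ZMod p) - ((m * (s+1) : ℕ) : ZMod p)) * h.coeff (r - (a:ℕ))
        = ∑ j ∈ Finset.range r, (if r - j ≤ s+1 then (h ^ n).coeff (s+1-(r-j)) else 0) *
          ((((ℓ * (r - j) : ℕ)) : ZMod p) - ((m * (s+1) : ℕ) : ZMod p)) * h.coeff (r - j) := by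
      exact Fin.sum_univ_eq_sum_range (fun j => (if r - j ≤ s+1 then (h ^ n).coeff (s+1-(r-j)) else 0) *
          ((((ℓ * (r - j) : ℕ)) : ZMod p) - ((m * (s+1) : ℕ) : ZMod p)) * h.coeff (r - j)) r
    have e1 : ∑ j ∈ Finset.range r, (if r - j ≤ s+1 then (h ^ n).coeff (s+1-(r-j)) else 0) *
          ((((ℓ * (r - j) : ℕ)) : ZMod p) - ((m * (s+1) : ℕ) : ZMod p)) * h.coeff (r - j)
        = ∑ j ∈ Finset.range r, (if j+1 ≤ s+1 then (h ^ n).coeff (s+1-(j+1)) else 0) *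
          ((((ℓ * (j+1) : ℕ)) : ZMod p) - ((m * (s+1) : ℕ) : ZMod p)) * h.coeff (j+1) := by
      have hrefl := Finset.sum_range_reflect
        (fun j => (if j+1 ≤ s+1 then (h ^ n).coeff (s+1-(j+1)) else 0) *
          ((((ℓ * (j+1) : ℕ)) : ZMod p) - ((m * (s+1) : ℕ) : ZMod p)) * h.coeff (j+1)) r
      rw [← hrefl]
      apply Finset.sum_congr rfl
      intro j hj
      simp only [Finset.mem_range] at hj
      have : r - 1 - j + 1 = r - j := by omega
      rw [this]
    rw [e0, e1]
    -- substitute hl and use claimB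
    have e2 : ∀ j ∈ Finset.range r,
        (if j+1 ≤ s+1 then (h ^ n).coeff (s+1-(j+1)) else 0) *
          ((((ℓ * (j+1) : ℕ)) : ZMod p) - ((m * (s+1) : ℕ) : ZMod p)) * h.coeff (j+1)
        = (m : ZMod p) * ((((n:ZMod p)+1) * (↑(j+1)) - ((s:ZMod p)+1)) * h.coeff (j+1) *
            (if j+1 ≤ s+1 then (h^n).coeff (s+1-(j+1)) else 0)) := by
      intro j hj
      have : ((ℓ * (j+1) : ℕ) : ZMod p) = (ℓ : ZMod p) * ((j:ZMod p)+1) := by push_cast; ring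
      rw [this, hl]
      push_cast
      ring
    rw [Finset.sum_congr rfl e2, ← Finset.mul_sum, claimB h n s r hdeg]
    push_cast
    ring
  · -- subdiagonal column
    have hsecond : ∑ a : Fin r, vvec p r h n (s:ℤ) a *
        (if (t:ℕ) = r - 1 then
          ((((ℓ * (r - (a:ℕ)) : ℕ)) : ZMod p) - ((m * (s+1) : ℕ) : ZMod p)) * h.coeff (r - (a:ℕ))
        else 0) = 0 := by
      apply Finset.sum_eq_zero
      intro a _
      rw [if_neg ht, mul_zero]
    rw [hsecond, add_zero]
    have htlt : (t:ℕ) + 1 < r := by have := t.isLt; omega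
    have hcond : ∀ a : Fin r, ((t:ℕ) + 1 = (a:ℕ)) ↔ a = ⟨(t:ℕ)+1, htlt⟩ := by
      intro a
      rw [Fin.ext_iff]
      exact ⟨fun hh => hh.symm, fun hh => hh.symm⟩
    simp only [hcond, mul_ite, mul_zero, Finset.sum_ite_eq', Finset.mem_univ, if_true]
    have hveq : vvec p r h n (s:ℤ) ⟨(t:ℕ)+1, htlt⟩ = vvec p r h n ((s:ℤ)+1) t := by
      simp only [vvec]
      have hcast : ((((⟨(t:ℕ)+1, htlt⟩ : Fin r) : ℕ)) : ℤ) = ((t:ℕ):ℤ) + 1 := by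
        simp
      rw [hcast]
      have harg : (s:ℤ) - r + 1 + (((t:ℕ):ℤ)+1) = ((s:ℤ)+1) - r + 1 + ((t:ℕ):ℤ) := by ring
      rw [harg]
    rw [hveq, Pi.smul_apply, smul_eq_mul]
    push_cast
    ring


/-- Let `p` be prime, `m, ℓ, n` nonnegative with `m·(n+1) ≡ ℓ (mod p)`,
and let `h ∈ 𝔽_p[x]` have degree `r ≥ 1`.  For every `s ≥ 0` one has
`((m·h_0)^s · s!) · v^n_s = h_0^n · e_r · (M^ℓ_0 M^ℓ_1 ⋯ M^ℓ_{s−1})` in `𝔽_p^r`. -/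
theorem stmt3 (p : ℕ) (hp : p.Prime) (m ℓ n : ℕ)
    (hcong : m * (n + 1) ≡ ℓ [MOD p])
    (h : Polynomial (ZMod p)) (r : ℕ) (hdeg : h.natDegree = r) (hr : 1 ≤ r)
    (s : ℕ) :
    (((m : ZMod p) * h.coeff 0) ^ s * (Nat.factorial s : ZMod p)) • vvec p r h n (s : ℤ)
      = (h.coeff 0 ^ n) •
          Matrix.vecMul (erow p r)
            (((List.range s).map fun i => Mmat p m ℓ r h (i + 1)).prod) := by
  have hl : (ℓ : ZMod p) = ((m * (n+1) : ℕ) : ZMod p) :=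
    ((ZMod.natCast_eq_natCast_iff _ _ _).2 hcong).symm
  induction s with
  | zero =>
    simp only [List.range_zero, List.map_nil, List.prod_nil, Matrix.vecMul_one,
      pow_zero, Nat.factorial_zero, Nat.cast_one, mul_one, one_smul, Nat.cast_zero]
    funext t
    have htlt := t.isLt
    simp only [vvec, erow, Pi.smul_apply, smul_eq_mul]
    by_cases ht : (t : ℕ) = r - 1
    · rw [if_pos (by rw [ht]; push_cast; omega), if_pos ht,
        show ((0:ℤ) - r + 1 + ((t:ℕ):ℤ)).toNat = 0 by rw [ht]; push_cast; omega]
      rw [mul_one]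
      simpa [Polynomial.constantCoeff_apply] using map_pow Polynomial.constantCoeff h n
    · rw [if_neg (by intro hcc; apply ht; push_cast at hcc; omega), if_neg ht, mul_zero]
  | succ s ih =>
    rw [List.range_succ, List.map_append, List.prod_append, List.map_cons, List.map_nil,
      List.prod_cons, List.prod_nil, mul_one, ← Matrix.vecMul_vecMul,
      ← Matrix.smul_vecMul, ← ih, Matrix.smul_vecMul,
      stepLemma p m ℓ n r h hdeg hr hl s]
    rw [smul_smul]
    have hc : (((s:ℕ)+1 : ℕ) : ℤ) = (s:ℤ)+1 := by push_cast; ring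
    rw [show (((s+1:ℕ)) : ℤ) = (s:ℤ)+1 by push_cast; ring]
    congr 1
    rw [Nat.factorial_succ]
    push_cast
    ring
end

section
/- Let p be a prime, let m, ℓ, n be nonnegative integers with p ∤ m and m·(n+1) ≡ ℓ (mod p), let c ∈ {0,1} satisfy c·n ≤ p−1, and set s := p − 1 − c·n. Let h ∈ 𝔽_p[x] have degree r ≥ 1 and h_0 = h(0) ≠ 0. Then v^n_s = m^{c·n} · h_0^{(c+1)·n} · (−1)^{c·n+1} · (c·n)! · e_r · ∏_{i=0}^{s−1} M^ℓ_i in 𝔽_p^r, where (c·n)! is computed in 𝔽_p. -/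
open Polynomial Finset

lemma polyrec (p : ℕ) (h : Polynomial (ZMod p)) (n : ℕ) :
    h * derivative (h ^ n) = (n : ZMod p) • (derivative h * h ^ n) := by
  cases n with
  | zero => simp
  | succ t =>
    rw [derivative_pow, smul_eq_C_mul]
    push_cast
    ring

lemma keyrec (p : ℕ) (h : Polynomial (ZMod p)) (n k : ℕ) :
    ∑ j ∈ Finset.range (k + 2),
      (((k : ZMod p) + 1) - ((n : ZMod p) + 1) * (j : ZMod p)) * h.coeff j *
        (h ^ n).coeff (k + 1 - j) = 0 := by
  have hco := congrArg (fun q => Polynomial.coeff q k) (polyrec p h n)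
  simp only [coeff_mul, coeff_smul, coeff_derivative, smul_eq_mul] at hco
  rw [Finset.Nat.sum_antidiagonal_eq_sum_range_succ_mk,
      Finset.Nat.sum_antidiagonal_eq_sum_range_succ_mk] at hco
  have e1 : ∀ j ∈ Finset.range (k + 2),
      (((k : ZMod p) + 1) - ((n : ZMod p) + 1) * (j : ZMod p)) * h.coeff j *
        (h ^ n).coeff (k + 1 - j)
      = ((k + 1 - j : ℕ) : ZMod p) * h.coeff j * (h ^ n).coeff (k + 1 - j)
        - (n : ZMod p) * (j : ZMod p) * h.coeff j * (h ^ n).coeff (k + 1 - j) := by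
    intro j hj
    simp only [Finset.mem_range] at hj
    have : ((k + 1 - j : ℕ) : ZMod p) = (k : ZMod p) + 1 - (j : ZMod p) := by
      have hle : j ≤ k + 1 := by omega
      push_cast [Nat.cast_sub hle]
      ring
    rw [this]; ring
  rw [Finset.sum_congr rfl e1, Finset.sum_sub_distrib]
  have e2 : ∑ j ∈ Finset.range (k + 2),
      ((k + 1 - j : ℕ) : ZMod p) * h.coeff j * (h ^ n).coeff (k + 1 - j)
      = ∑ j ∈ Finset.range (k + 1), h.coeff j * ((h ^ n).coeff (k - j + 1) * (((k - j : ℕ) : ZMod p) + 1)) := by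
    rw [Finset.sum_range_succ]
    simp only [Nat.sub_self, Nat.cast_zero, zero_mul]
    rw [add_zero]
    refine Finset.sum_congr rfl fun j hj => ?_
    simp only [Finset.mem_range] at hj
    have h1 : k + 1 - j = k - j + 1 := by omega
    rw [h1]
    push_cast
    ring
  have e3 : ∑ j ∈ Finset.range (k + 2),
      (n : ZMod p) * (j : ZMod p) * h.coeff j * (h ^ n).coeff (k + 1 - j)
      = (n : ZMod p) * ∑ j ∈ Finset.range (k + 1),
          h.coeff (j + 1) * (((j : ZMod p) + 1)) * (h ^ n).coeff (k - j) := by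
    rw [Finset.sum_range_succ']
    simp only [Nat.cast_zero, mul_zero, zero_mul, add_zero, Finset.mul_sum]
    refine Finset.sum_congr rfl fun j hj => ?_
    have h1 : k + 1 - (j + 1) = k - j := by omega
    rw [h1]
    push_cast
    ring
  rw [e2, e3, hco, sub_self]

lemma step (p m ℓ n r : ℕ) (h : Polynomial (ZMod p)) (hdeg : h.natDegree = r)
    (hl : (m : ZMod p) * ((n : ZMod p) + 1) = (ℓ : ZMod p)) (k : ℕ) :
    Matrix.vecMul (vvec p r h n (k : ℤ)) (Mmat p m ℓ r h (k + 1))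
      = ((m : ZMod p) * ((k : ZMod p) + 1) * h.coeff 0) • vvec p r h n ((k : ℤ) + 1) := by
  set f := h ^ n with hf
  set F : ℕ → ZMod p := fun j =>
    ((ℓ : ZMod p) * j - (m : ZMod p) * ((k : ZMod p) + 1)) * h.coeff j *
      (if 0 ≤ (k : ℤ) + 1 - (j : ℤ) then f.coeff ((k : ℤ) + 1 - (j : ℤ)).toNat else 0) with hF
  -- the guarded recurrence
  have S0 : ∑ j ∈ Finset.range (k + 2), F j = 0 := by
    have key := keyrec p h n k
    have : ∀ j ∈ Finset.range (k + 2), F j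
        = (-(m : ZMod p)) * ((((k : ZMod p) + 1) - ((n : ZMod p) + 1) * (j : ZMod p)) * h.coeff j *
            (h ^ n).coeff (k + 1 - j)) := by
      intro j hj
      simp only [Finset.mem_range] at hj
      have hg : (0 : ℤ) ≤ (k : ℤ) + 1 - (j : ℤ) := by omega
      have ht : ((k : ℤ) + 1 - (j : ℤ)).toNat = k + 1 - j := by omega
      rw [hF]
      simp only [if_pos hg, ht, ← hf]
      have : (-(m : ZMod p)) * (((k : ZMod p) + 1) - ((n : ZMod p) + 1) * (j : ZMod p))
          = (ℓ : ZMod p) * j - (m : ZMod p) * ((k : ZMod p) + 1) := by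
        rw [← hl]; ring
      rw [← this]; ring
    rw [Finset.sum_congr rfl this, ← Finset.mul_sum, key, mul_zero]
  have hF0 : F 0 = -((m : ZMod p) * ((k : ZMod p) + 1) * h.coeff 0 * f.coeff (k + 1)) := by
    rw [hF]
    have hg : (0 : ℤ) ≤ (k : ℤ) + 1 - (0 : ℤ) := by omega
    simp only [Nat.cast_zero, if_pos hg]
    have : ((k : ℤ) + 1 - (0:ℤ)).toNat = k + 1 := by omega
    rw [this]; ring
  have S1 : ∑ j ∈ Finset.range (k + 1), F (j + 1)
      = (m : ZMod p) * ((k : ZMod p) + 1) * h.coeff 0 * f.coeff (k + 1) := by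
    have := Finset.sum_range_succ' F (k + 1)
    rw [S0, hF0] at this
    linear_combination -this
  -- extend both to a common range
  have hvan1 : ∀ j, r ≤ j → F (j + 1) = 0 := by
    intro j hj
    have : h.coeff (j + 1) = 0 := by
      apply Polynomial.coeff_eq_zero_of_natDegree_lt; omega
    rw [hF]; simp [this]
  have hvan2 : ∀ j, k + 1 ≤ j → F (j + 1) = 0 := by
    intro j hj
    have hg : ¬ (0 : ℤ) ≤ (k : ℤ) + 1 - ((j+1 : ℕ) : ℤ) := by push_cast; omega
    rw [hF]; simp only [if_neg hg, mul_zero]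
  have S2 : ∑ j ∈ Finset.range r, F (j + 1)
      = (m : ZMod p) * ((k : ZMod p) + 1) * h.coeff 0 * f.coeff (k + 1) := by
    rw [← S1]
    rcases le_total r (k + 1) with hle | hle
    · apply Finset.sum_subset (Finset.range_subset_range.mpr hle)
      intro j _ hj
      simp only [Finset.mem_range, not_lt] at hj
      exact hvan1 j hj
    · symm
      apply Finset.sum_subset (Finset.range_subset_range.mpr hle)
      intro j _ hj
      simp only [Finset.mem_range, not_lt] at hj
      exact hvan2 j hj
  -- now the main computation
  funext t
  simp only [Matrix.vecMul, dotProduct, Mmat, Matrix.of_apply,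
    Pi.smul_apply, smul_eq_mul]
  by_cases ht : (t : ℕ) = r - 1
  · have hr1 : 0 < r := t.pos
    have hone : ∀ i : Fin r, vvec p r h n (k:ℤ) i *
        ((if (t:ℕ)+1 = (i:ℕ) then ((m*(k+1):ℕ):ZMod p) * h.coeff 0 else 0) +
         (if (t:ℕ) = r - 1 then
            (((ℓ * (r - (i:ℕ)) : ℕ):ZMod p) - ((m*(k+1):ℕ):ZMod p)) * h.coeff (r - (i:ℕ))
          else 0))
        = vvec p r h n (k:ℤ) i *
            ((((ℓ * (r - (i:ℕ)) : ℕ):ZMod p) - ((m*(k+1):ℕ):ZMod p)) * h.coeff (r - (i:ℕ))) := by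
      intro i
      have hi := i.isLt
      rw [if_pos ht, if_neg (by omega), zero_add]
    rw [Finset.sum_congr rfl (fun i _ => hone i)]
    simp only [vvec]
    have hidx : ((k:ℤ) + 1 - (r:ℤ) + 1 + ((t:ℕ):ℤ)) = (k:ℤ) + 1 := by
      have := t.isLt; omega
    rw [hidx, if_pos (by omega : (0:ℤ) ≤ (k:ℤ) + 1),
      (by omega : ((k:ℤ)+1).toNat = k + 1)]
    rw [Fin.sum_univ_eq_sum_range (fun i =>
      (if 0 ≤ (k:ℤ) - (r:ℤ) + 1 + ((i:ℕ):ℤ) then (h^n).coeff ((k:ℤ) - (r:ℤ) + 1 + ((i:ℕ):ℤ)).toNat else 0) *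
        (((((ℓ * (r - i) : ℕ)):ZMod p) - ((m*(k+1):ℕ):ZMod p)) * h.coeff (r - i))) r]
    rw [← Finset.sum_range_reflect]
    have hterm : ∀ i ∈ Finset.range r,
        (if 0 ≤ (k:ℤ) - (r:ℤ) + 1 + ((r-1-i : ℕ):ℤ) then
            (h^n).coeff ((k:ℤ) - (r:ℤ) + 1 + ((r-1-i : ℕ):ℤ)).toNat else 0) *
          (((((ℓ * (r - (r-1-i)) : ℕ)):ZMod p) - ((m*(k+1):ℕ):ZMod p)) * h.coeff (r - (r-1-i)))
        = F (i + 1) := by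
      intro i hi
      simp only [Finset.mem_range] at hi
      have e1 : r - (r-1-i) = i + 1 := by omega
      have e2 : ((k:ℤ) - (r:ℤ) + 1 + ((r-1-i : ℕ):ℤ)) = (k:ℤ) + 1 - ((i+1 : ℕ):ℤ) := by omega
      rw [e1, e2, hF]
      push_cast
      ring
    rw [Finset.sum_congr rfl hterm, S2]
  · have hone : ∀ i : Fin r, vvec p r h n (k:ℤ) i *
        ((if (t:ℕ)+1 = (i:ℕ) then ((m*(k+1):ℕ):ZMod p) * h.coeff 0 else 0) +
         (if (t:ℕ) = r - 1 then
            (((ℓ * (r - (i:ℕ)) : ℕ):ZMod p) - ((m*(k+1):ℕ):ZMod p)) * h.coeff (r - (i:ℕ))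
          else 0))
        = vvec p r h n (k:ℤ) i *
            (if (t:ℕ)+1 = (i:ℕ) then ((m*(k+1):ℕ):ZMod p) * h.coeff 0 else 0) := by
      intro i
      rw [if_neg ht, add_zero]
    rw [Finset.sum_congr rfl (fun i _ => hone i)]
    have hti := t.isLt
    have ht1 : (t:ℕ) + 1 < r := by omega
    rw [Finset.sum_eq_single (⟨(t:ℕ)+1, ht1⟩ : Fin r)]
    · simp only [if_pos rfl, vvec]
      have hidx : ((k:ℤ) - (r:ℤ) + 1 + (((t:ℕ)+1 : ℕ):ℤ)) = (k:ℤ) + 1 - (r:ℤ) + 1 + ((t:ℕ):ℤ) := by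
        push_cast; ring
      rw [hidx]
      push_cast
      ring
    · intro i _ hne
      have : ¬ ((t:ℕ)+1 = (i:ℕ)) := by
        intro hEq
        exact hne (Fin.ext hEq.symm)
      rw [if_neg this, mul_zero]
    · intro habs
      exact absurd (Finset.mem_univ _) habs

lemma iter (p m ℓ n r : ℕ) (h : Polynomial (ZMod p)) (hdeg : h.natDegree = r)
    (hl : (m : ZMod p) * ((n : ZMod p) + 1) = (ℓ : ZMod p)) (t : ℕ) :
    Matrix.vecMul (vvec p r h n (0 : ℤ))
        (((List.range t).map fun i => Mmat p m ℓ r h (i + 1)).prod)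
      = (∏ i ∈ Finset.range t, ((m : ZMod p) * ((i : ZMod p) + 1) * h.coeff 0)) •
          vvec p r h n (t : ℤ) := by
  induction t with
  | zero => simp [Matrix.vecMul_one]
  | succ t ih =>
    rw [List.range_succ, List.map_append, List.prod_append, List.map_singleton,
      List.prod_singleton, ← Matrix.vecMul_vecMul, ih, Matrix.smul_vecMul,
      step p m ℓ n r h hdeg hl t, Finset.prod_range_succ, smul_smul]
    have : (((t + 1 : ℕ) : ℤ)) = ((t : ℤ) + 1) := by push_cast; ring
    rw [this]

lemma v0 (p n r : ℕ) (h : Polynomial (ZMod p)) (hr : 1 ≤ r) :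
    vvec p r h n (0 : ℤ) = (h.coeff 0 ^ n) • erow p r := by
  funext t
  simp only [vvec, erow, Pi.smul_apply, smul_eq_mul]
  have hti := t.isLt
  by_cases ht : (t : ℕ) = r - 1
  · have e : (0:ℤ) - (r:ℤ) + 1 + ((t:ℕ):ℤ) = 0 := by omega
    rw [e, if_pos le_rfl, if_pos ht, mul_one, Int.toNat_zero,
      Polynomial.coeff_zero_eq_eval_zero, Polynomial.eval_pow,
      ← Polynomial.coeff_zero_eq_eval_zero]
  · have e : ¬ (0:ℤ) ≤ (0:ℤ) - (r:ℤ) + 1 + ((t:ℕ):ℤ) := by omega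
    rw [if_neg e, if_neg ht, mul_zero]

lemma factfact (p : ℕ) (hp : p.Prime) [Fact p.Prime] : ∀ a, a ≤ p - 1 →
    ((Nat.factorial (p - 1 - a) : ZMod p)) * (Nat.factorial a : ZMod p) = (-1) ^ (a + 1) := by
  intro a
  induction a with
  | zero => intro _; simpa using ZMod.wilsons_lemma p
  | succ a ih =>
    intro ha
    have hp2 := hp.two_le
    have ih' := ih (by omega)
    have h1 : p - 1 - a = (p - 1 - (a+1)) + 1 := by omega
    rw [h1, Nat.factorial_succ] at ih'
    push_cast at ih'
    have hcast : ((p - 1 - (a+1) : ℕ) : ZMod p) + 1 = -((a : ZMod p) + 1) := by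
      have hsum : (p - 1 - (a+1) + 1) + (a + 1) = p := by omega
      have := congrArg (Nat.cast : ℕ → ZMod p) hsum
      push_cast [ZMod.natCast_self] at this
      linear_combination this
    rw [hcast] at ih'
    rw [Nat.factorial_succ]
    push_cast
    rw [pow_succ]
    linear_combination -ih'

/-- Let `p` be prime, `m, ℓ, n` nonnegative with `p ∤ m` and
`m·(n+1) ≡ ℓ (mod p)`, let `c ∈ {0,1}` satisfy `c·n ≤ p−1`, and set `s := p − 1 − c·n`.
Let `h ∈ 𝔽_p[x]` have degree `r ≥ 1` and `h_0 = h(0) ≠ 0`.  Then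
`v^n_s = m^{c·n} · h_0^{(c+1)·n} · (−1)^{c·n+1} · (c·n)! · e_r · ∏_{i=0}^{s−1} M^ℓ_i`
in `𝔽_p^r`. -/
theorem stmt4 (p : ℕ) (hp : p.Prime) (m ℓ n c : ℕ)
    (hpm : ¬ p ∣ m) (hcong : m * (n + 1) ≡ ℓ [MOD p])
    (hc : c = 0 ∨ c = 1) (hcn : c * n ≤ p - 1)
    (h : Polynomial (ZMod p)) (r : ℕ) (hdeg : h.natDegree = r) (hr : 1 ≤ r)
    (h0 : h.coeff 0 ≠ 0) :
    vvec p r h n ((p - 1 - c * n : ℕ) : ℤ)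
      = ((m : ZMod p) ^ (c * n) * h.coeff 0 ^ ((c + 1) * n) * (-1) ^ (c * n + 1)
            * (Nat.factorial (c * n) : ZMod p)) •
          Matrix.vecMul (erow p r)
            (((List.range (p - 1 - c * n)).map fun i => Mmat p m ℓ r h (i + 1)).prod) := by
  haveI := Fact.mk hp
  have hp2 := hp.two_le
  set s := p - 1 - c * n with hs
  have hl : (m : ZMod p) * ((n : ZMod p) + 1) = (ℓ : ZMod p) := by
    have := (ZMod.natCast_eq_natCast_iff _ _ _).mpr hcong
    push_cast at this
    exact this
  have hIter := iter p m ℓ n r h hdeg hl s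
  rw [v0 p n r h hr, Matrix.smul_vecMul] at hIter
  set X := Matrix.vecMul (erow p r)
    (((List.range s).map fun i => Mmat p m ℓ r h (i + 1)).prod) with hX
  set C := ∏ i ∈ Finset.range s, ((m : ZMod p) * ((i : ZMod p) + 1) * h.coeff 0) with hC
  set K := (m : ZMod p) ^ (c * n) * h.coeff 0 ^ ((c + 1) * n) * (-1) ^ (c * n + 1)
    * (Nat.factorial (c * n) : ZMod p) with hK
  have hm0 : (m : ZMod p) ≠ 0 := by
    rw [Ne, ZMod.natCast_eq_zero_iff]
    exact hpm
  have hCval : C = (m : ZMod p) ^ s * (Nat.factorial s : ZMod p) * h.coeff 0 ^ s := by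
    rw [hC, Finset.prod_mul_distrib, Finset.prod_mul_distrib, Finset.prod_const,
      Finset.prod_const, Finset.card_range]
    congr 1
    congr 1
    rw [← Finset.prod_range_add_one_eq_factorial s]
    push_cast
    rfl
  have hsfacne : (Nat.factorial s : ZMod p) ≠ 0 := by
    rw [Ne, ZMod.natCast_eq_zero_iff]
    intro hdvd
    have := (Nat.Prime.dvd_factorial hp).mp hdvd
    omega
  have hCne : C ≠ 0 := by
    rw [hCval]
    exact mul_ne_zero (mul_ne_zero (pow_ne_zero _ hm0) hsfacne) (pow_ne_zero _ h0)
  have hKC : K * C = h.coeff 0 ^ n := by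
    have h1 : (m : ZMod p) ^ (c * n) * (m : ZMod p) ^ s = 1 := by
      rw [← pow_add, (by omega : c * n + s = p - 1)]
      exact ZMod.pow_card_sub_one_eq_one hm0
    have h2 : h.coeff 0 ^ ((c + 1) * n) * h.coeff 0 ^ s = h.coeff 0 ^ n := by
      rw [← pow_add, (by ring_nf; omega : (c + 1) * n + s = n + (p - 1)), pow_add,
        ZMod.pow_card_sub_one_eq_one h0, mul_one]
    have h3 : (-1 : ZMod p) ^ (c * n + 1) * (Nat.factorial (c * n) : ZMod p)
        * (Nat.factorial s : ZMod p) = 1 := by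
      have hff := factfact p hp (c * n) hcn
      rw [← hs] at hff
      calc (-1 : ZMod p) ^ (c * n + 1) * (Nat.factorial (c * n) : ZMod p)
            * (Nat.factorial s : ZMod p)
          = (-1 : ZMod p) ^ (c * n + 1) * ((Nat.factorial s : ZMod p)
            * (Nat.factorial (c * n) : ZMod p)) := by ring
        _ = (-1 : ZMod p) ^ (c * n + 1) * (-1 : ZMod p) ^ (c * n + 1) := by rw [hff]
        _ = 1 := by
              rw [← pow_add]
              exact Even.neg_one_pow ⟨c * n + 1, rfl⟩
    calc K * C = ((m : ZMod p) ^ (c * n) * (m : ZMod p) ^ s)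
          * (h.coeff 0 ^ ((c + 1) * n) * h.coeff 0 ^ s)
          * ((-1 : ZMod p) ^ (c * n + 1) * (Nat.factorial (c * n) : ZMod p)
            * (Nat.factorial s : ZMod p)) := by rw [hK, hCval]; ring
      _ = h.coeff 0 ^ n := by rw [h1, h2, h3, one_mul, mul_one]
  apply smul_right_injective (Fin r → ZMod p) hCne
  show C • _ = C • _
  rw [smul_smul, mul_comm C K, hKC, hIter]
end

section
/- Let p be a prime and let R be a commutative ring of characteristic p. For every natural number a, the (p−1)-fold formal derivative of X^a in R[X] equals −X^{a−(p−1)} if a ≡ p−1 (mod p), and equals 0 otherwise. -/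
open Polynomial Finset

lemma descFact_cast (p : ℕ) [NeZero p] (a k : ℕ) (h : k ≤ a) :
    ((a.descFactorial k : ZMod p)) = ∏ i ∈ range k, ((a : ZMod p) - i) := by
  rw [Nat.descFactorial_eq_prod_range, Nat.cast_prod]
  refine prod_congr rfl fun i hi => ?_
  rw [Nat.cast_sub (le_trans (mem_range.mp hi).le h)]

lemma key_s7 (p : ℕ) (hp : p.Prime) (a : ℕ) :
    ((a.descFactorial (p - 1) : ZMod p)) =
      if a % p = (p - 1) % p then -1 else 0 := by
  have hp2 := hp.two_le
  haveI : Fact p.Prime := ⟨hp⟩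
  have hmod : (p - 1) % p = p - 1 := Nat.mod_eq_of_lt (by omega)
  rcases lt_or_ge a (p - 1) with h | h
  · rw [Nat.descFactorial_eq_zero_iff_lt.mpr h]
    rw [if_neg]
    · simp
    · rw [hmod, Nat.mod_eq_of_lt (by omega)]; omega
  · rw [descFact_cast p a _ h]
    by_cases hc : a % p = (p - 1) % p
    · rw [if_pos hc]
      have ha : (a : ZMod p) = ((p - 1 : ℕ) : ZMod p) := by
        rw [← ZMod.natCast_mod a p, hc, ZMod.natCast_mod]
      have : ∏ i ∈ range (p - 1), ((a : ZMod p) - i)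
          = ((p - 1).descFactorial (p - 1) : ZMod p) := by
        rw [descFact_cast p (p - 1) (p - 1) le_rfl, ha]
      rw [this, Nat.descFactorial_self, ZMod.wilsons_lemma]
    · rw [if_neg hc]
      apply prod_eq_zero (i := a % p)
      · apply mem_range.mpr
        have := Nat.mod_lt a (show 0 < p by omega)
        rw [hmod] at hc; omega
      · rw [← ZMod.natCast_mod a p]
        ring

/-- Let `p` be prime and `R` a commutative ring of characteristic `p`.
For every natural number `a`, the `(p−1)`-fold formal derivative of `X^a` in `R[X]`
equals `−X^{a−(p−1)}` if `a ≡ p−1 (mod p)`, and equals `0` otherwise. -/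
theorem stmt7 (p : ℕ) (hp : p.Prime) (R : Type*) [CommRing R] [CharP R p] (a : ℕ) :
    (fun q : Polynomial R => Polynomial.derivative q)^[p - 1] (Polynomial.X ^ a)
      = if a % p = (p - 1) % p then -(Polynomial.X ^ (a - (p - 1))) else 0 := by
  have h := Polynomial.iterate_derivative_X_pow_eq_C_mul (R := R) a (p - 1)
  show Polynomial.derivative^[p-1] (Polynomial.X ^ a) = _
  rw [h]
  have : ((a.descFactorial (p - 1) : R)) =
      (ZMod.castHom (dvd_refl p) R) ((a.descFactorial (p - 1) : ZMod p)) := by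
    simp
  rw [key_s7 p hp a] at this
  split_ifs with hc
  · rw [if_pos hc, map_neg, map_one] at this
    simp [this]
  · rw [if_neg hc, map_zero] at this
    simp [this]
end

section
/- Let p be a prime, let G be a polynomial in two variables x, y over 𝔽_p, and let k, ℓ be integers with 1 ≤ k ≤ p and 1 ≤ ℓ ≤ p. Let ∇ denote the differential operator ∂^{2p−2}/∂x^{p−1}∂y^{p−1} (the (p−1)-fold partial derivative in x composed with the (p−1)-fold partial derivative in y). Then ∇(G · x^{k−1} y^{ℓ−1}) = ∑_{i ≥ 1, j ≥ 1} G_{i·p−k, j·p−ℓ} · x^{(i−1)·p} · y^{(j−1)·p}, where G_{a,b} denotes the coefficient of x^a y^b in G and the sum has only finitely many nonzero terms. -/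
open MvPolynomial

lemma mod_iff_aux (p m : ℕ) (hp : 1 ≤ p) : m % p = p - 1 ↔ p ∣ (m + 1) := by
  constructor
  · intro h
    refine ⟨m / p + 1, ?_⟩
    have h2 := Nat.div_add_mod m p
    rw [Nat.mul_add, Nat.mul_one]
    generalize p * (m / p) = a at h2 ⊢
    omega
  · rintro ⟨c, hc⟩
    rcases c with _ | c
    · omega
    · have hm : m = p * c + (p - 1) := by
        rw [Nat.mul_add, Nat.mul_one] at hc
        generalize p * c = a at hc ⊢
        omega
      rw [hm, Nat.mul_add_mod, Nat.mod_eq_of_lt (by omega)]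

lemma fin2_decomp (d : Fin 2 →₀ ℕ) : d = Finsupp.single 0 (d 0) + Finsupp.single 1 (d 1) := by
  ext t
  fin_cases t <;> simp [Finsupp.single_apply]

lemma apply_le_sum (d : Fin 2 →₀ ℕ) (t : Fin 2) : d t ≤ d.sum fun _ e => e := by
  by_cases h : t ∈ d.support
  · exact Finset.single_le_sum (fun _ _ => Nat.zero_le _) h
  · simp [Finsupp.notMem_support_iff.mp h]

lemma cast_df (p : ℕ) (hp : p.Prime) (m : ℕ) :
    ((m.descFactorial (p - 1) : ℕ) : ZMod p) = if m % p = p - 1 then -1 else 0 := by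
  haveI : Fact p.Prime := ⟨hp⟩
  have hp1 : 1 ≤ p := hp.one_lt.le
  rw [Nat.descFactorial_eq_prod_range, Nat.cast_prod]
  split_ifs with h
  · have hm : p - 1 ≤ m := h ▸ Nat.mod_le m p
    have key : ∀ t ∈ Finset.range (p - 1), ((m - t : ℕ) : ZMod p) = ((p - 1 - t : ℕ) : ZMod p) := by
      intro t ht
      rw [Finset.mem_range] at ht
      rw [ZMod.natCast_eq_natCast_iff]
      have hmod : (m - t) + t ≡ (p - 1 - t) + t [MOD p] := by
        rw [Nat.sub_add_cancel (le_trans ht.le hm), Nat.sub_add_cancel ht.le]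
        show m % p = (p - 1) % p
        rw [h, Nat.mod_eq_of_lt (by omega)]
      exact hmod.add_right_cancel' t
    rw [Finset.prod_congr rfl key, ← Nat.cast_prod, ← Nat.descFactorial_eq_prod_range,
      Nat.descFactorial_self, ZMod.wilsons_lemma]
  · rcases lt_or_ge m (p - 1) with hm | hm
    · refine Finset.prod_eq_zero (Finset.mem_range.mpr hm) ?_
      simp
    · have hr : m % p < p - 1 := by
        have := Nat.mod_lt m (show 0 < p by omega)
        omega
      refine Finset.prod_eq_zero (Finset.mem_range.mpr hr) ?_
      rw [ZMod.natCast_eq_zero_iff]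
      have h2 := Nat.div_add_mod m p
      exact ⟨m / p, by generalize p * (m / p) = a at h2 ⊢; omega⟩


/-- The differential operator `∇ = ∂^{2p−2}/∂x^{p−1}∂y^{p−1}` on `𝔽_p[x,y]`:
the `(p−1)`-fold formal partial derivative in `x` composed with the `(p−1)`-fold
formal partial derivative in `y` (`x` is the variable `0`, `y` the variable `1`). -/
noncomputable def nabla (p : ℕ) :
    MvPolynomial (Fin 2) (ZMod p) → MvPolynomial (Fin 2) (ZMod p) :=
  (fun q => pderiv (0 : Fin 2) q)^[p - 1] ∘ (fun q => pderiv (1 : Fin 2) q)^[p - 1]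

lemma pderiv_iterate (p : ℕ) (i : Fin 2) (n : ℕ) (d : Fin 2 →₀ ℕ) (c : ZMod p) :
    (fun q => pderiv i q)^[n] (monomial d c)
      = monomial (d - Finsupp.single i n) (c * ((d i).descFactorial n : ℕ)) := by
  induction n with
  | zero => simp
  | succ n ih =>
    rw [Function.iterate_succ_apply', ih, pderiv_monomial]
    rw [tsub_tsub, ← Finsupp.single_add, Finsupp.tsub_apply, Finsupp.single_eq_same,
      Nat.descFactorial_succ, Nat.cast_mul]
    ring_nf

lemma pderiv_iterate_sum (p : ℕ) (i : Fin 2) (n : ℕ) {α : Type*} (s : Finset α)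
    (f : α → MvPolynomial (Fin 2) (ZMod p)) :
    (fun q => pderiv i q)^[n] (∑ x ∈ s, f x) = ∑ x ∈ s, (fun q => pderiv i q)^[n] (f x) := by
  induction n with
  | zero => simp
  | succ n ih =>
    rw [Function.iterate_succ_apply', ih, map_sum]
    exact Finset.sum_congr rfl fun x _ => (Function.iterate_succ_apply' _ n (f x)).symm

lemma nabla_monomial (p : ℕ) (d : Fin 2 →₀ ℕ) (c : ZMod p) :
    nabla p (monomial d c)
      = monomial (d - Finsupp.single 1 (p - 1) - Finsupp.single 0 (p - 1))
          (c * ((d 1).descFactorial (p - 1) : ℕ) * ((d 0).descFactorial (p - 1) : ℕ)) := by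
  show (fun q => pderiv (0 : Fin 2) q)^[p - 1] ((fun q => pderiv (1 : Fin 2) q)^[p - 1] _) = _
  rw [pderiv_iterate, pderiv_iterate]
  congr 2
  rw [Finsupp.tsub_apply, Finsupp.single_apply]
  norm_num

/-- Let `p` be prime, `G ∈ 𝔽_p[x,y]`, and `1 ≤ k, ℓ ≤ p`.  Then
`∇(G · x^{k−1} y^{ℓ−1}) = ∑_{i,j ≥ 1} G_{i·p−k, j·p−ℓ} · x^{(i−1)·p} · y^{(j−1)·p}`,
where `G_{a,b}` is the coefficient of `x^a y^b` in `G` (the sum, taken here as a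
`finsum` over shifted indices, has only finitely many nonzero terms). -/
theorem stmt8 (p : ℕ) (hp : p.Prime) (G : MvPolynomial (Fin 2) (ZMod p))
    (k ℓ : ℕ) (hk1 : 1 ≤ k) (hkp : k ≤ p) (hl1 : 1 ≤ ℓ) (hlp : ℓ ≤ p) :
    nabla p (G * X 0 ^ (k - 1) * X 1 ^ (ℓ - 1))
      = ∑ᶠ (i : ℕ) (j : ℕ),
          C (coeff (Finsupp.single 0 ((i + 1) * p - k) + Finsupp.single 1 ((j + 1) * p - ℓ)) G)
            * X 0 ^ (i * p) * X 1 ^ (j * p) := by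
  classical
  haveI : Fact p.Prime := ⟨hp⟩
  have hp1 : 1 ≤ p := hp.one_lt.le
  set D := G.totalDegree with hD
  set N := D + 1 with hN
  set dij : ℕ → ℕ → (Fin 2 →₀ ℕ) :=
    fun i j => Finsupp.single 0 ((i + 1) * p - k) + Finsupp.single 1 ((j + 1) * p - ℓ) with hdij
  set f : ℕ → ℕ → MvPolynomial (Fin 2) (ZMod p) :=
    fun i j => C (coeff (dij i j) G) * X 0 ^ (i * p) * X 1 ^ (j * p) with hf
  -- values of dij
  have hdij0 : ∀ i j, dij i j 0 = (i + 1) * p - k := by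
    intro i j; simp [hdij, Finsupp.single_apply]
  have hdij1 : ∀ i j, dij i j 1 = (j + 1) * p - ℓ := by
    intro i j; simp [hdij, Finsupp.single_apply]
  -- vanishing for large indices
  have hzero : ∀ i j : ℕ, N ≤ i ∨ N ≤ j → f i j = 0 := by
    intro i j hij
    have hc : coeff (dij i j) G = 0 := by
      by_contra h
      have hmem : dij i j ∈ G.support := MvPolynomial.mem_support_iff.mpr h
      have hle := le_totalDegree hmem
      have hsum : (dij i j).sum (fun _ e => e) = ((i + 1) * p - k) + ((j + 1) * p - ℓ) := by
        rw [hdij, Finsupp.sum_add_index' (fun _ => rfl) (fun _ _ _ => rfl),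
          Finsupp.sum_single_index rfl, Finsupp.sum_single_index rfl]
      rw [hsum] at hle
      have hip : i ≤ i * p := Nat.le_mul_of_pos_right i (by omega)
      have hjp : j ≤ j * p := Nat.le_mul_of_pos_right j (by omega)
      have e1 : (i + 1) * p = i * p + p := by ring
      have e2 : (j + 1) * p = j * p + p := by ring
      omega
    rw [hf]; simp only; rw [hc]; simp
  -- finsum to finite sums
  have hfin1 : ∀ i, ∑ᶠ j, f i j = ∑ j ∈ Finset.range N, f i j := by
    intro i
    refine finsum_eq_sum_of_support_subset _ ?_
    intro j hj
    simp only [Function.mem_support] at hj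
    by_contra hjN
    exact hj (hzero i j (Or.inr (by simpa [Finset.mem_coe, Finset.mem_range, Nat.not_lt] using hjN)))
  have hfin0 : (∑ᶠ (i : ℕ) (j : ℕ), f i j) = ∑ i ∈ Finset.range N, ∑ j ∈ Finset.range N, f i j := by
    have h1 : (∑ᶠ (i : ℕ) (j : ℕ), f i j) = ∑ i ∈ Finset.range N, ∑ᶠ j, f i j := by
      refine finsum_eq_sum_of_support_subset _ ?_
      intro i hi
      simp only [Function.mem_support] at hi
      by_contra hiN
      have hiN' : N ≤ i := by simpa [Finset.mem_coe, Finset.mem_range, Nat.not_lt] using hiN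
      exact hi (by rw [hfin1 i]; exact Finset.sum_eq_zero fun j _ => hzero i j (Or.inl hiN'))
    rw [h1]
    exact Finset.sum_congr rfl fun i _ => hfin1 i
  rw [show (∑ᶠ (i : ℕ) (j : ℕ),
          C (coeff (Finsupp.single 0 ((i + 1) * p - k) + Finsupp.single 1 ((j + 1) * p - ℓ)) G)
            * X 0 ^ (i * p) * X 1 ^ (j * p)) = ∑ᶠ (i : ℕ) (j : ℕ), f i j from rfl, hfin0]
  -- key arithmetic helper
  have key0 : ∀ a b : ℕ, 1 ≤ b → b ≤ p → a ≤ D → (a + (b - 1)) % p = p - 1 →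
      a + b = ((a + b) / p - 1 + 1) * p ∧ (a + b) / p - 1 < N := by
    intro a b hb1 hbp haD hmod
    have hdvd : p ∣ (a + b) := by
      have h1 := (mod_iff_aux p (a + (b - 1)) hp1).mp hmod
      have h2 : a + (b - 1) + 1 = a + b := by omega
      rwa [h2] at h1
    have hq : (a + b) / p * p = a + b := Nat.div_mul_cancel hdvd
    have hq1 : 1 ≤ (a + b) / p := by
      rcases Nat.eq_zero_or_pos ((a + b) / p) with h | h
      · rw [h, Nat.zero_mul] at hq; omega
      · exact h
    have hqN : (a + b) / p ≤ N := by
      refine Nat.le_of_mul_le_mul_right ?_ (show 0 < p by omega)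
      rw [hq]
      have e1 : N * p = D * p + p := by rw [hN]; ring
      have hDp : D ≤ D * p := Nat.le_mul_of_pos_right D (by omega)
      omega
    have e2 : ((a + b) / p - 1 + 1) = (a + b) / p := by omega
    rw [e2, hq]
    omega
  -- LHS as a sum over the support
  set e : (Fin 2 →₀ ℕ) → (Fin 2 →₀ ℕ) := fun d =>
    d + Finsupp.single 0 (k - 1) + Finsupp.single 1 (ℓ - 1)
      - Finsupp.single 1 (p - 1) - Finsupp.single 0 (p - 1) with he
  have hL1 : G * X 0 ^ (k - 1) * X 1 ^ (ℓ - 1)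
      = ∑ d ∈ G.support,
          monomial (d + Finsupp.single 0 (k - 1) + Finsupp.single 1 (ℓ - 1)) (coeff d G) := by
    conv_lhs => rw [G.as_sum]
    rw [Finset.sum_mul, Finset.sum_mul]
    exact Finset.sum_congr rfl fun d _ => by
      rw [X_pow_eq_monomial, X_pow_eq_monomial, monomial_mul, monomial_mul, mul_one, mul_one]
  have hL2 : nabla p (G * X 0 ^ (k - 1) * X 1 ^ (ℓ - 1))
      = ∑ d ∈ G.support,
          nabla p (monomial (d + Finsupp.single 0 (k - 1) + Finsupp.single 1 (ℓ - 1))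
            (coeff d G)) := by
    rw [hL1]
    show (fun q => pderiv (0 : Fin 2) q)^[p - 1] ((fun q => pderiv (1 : Fin 2) q)^[p - 1] _) = _
    rw [pderiv_iterate_sum, pderiv_iterate_sum]
    rfl
  have happ0 : ∀ d : Fin 2 →₀ ℕ,
      (d + Finsupp.single 0 (k - 1) + Finsupp.single 1 (ℓ - 1) : Fin 2 →₀ ℕ) 0
        = d 0 + (k - 1) := by
    intro d; simp [Finsupp.single_apply]
  have happ1 : ∀ d : Fin 2 →₀ ℕ,
      (d + Finsupp.single 0 (k - 1) + Finsupp.single 1 (ℓ - 1) : Fin 2 →₀ ℕ) 1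
        = d 1 + (ℓ - 1) := by
    intro d; simp [Finsupp.single_apply]
  have hterm : ∀ d ∈ G.support,
      nabla p (monomial (d + Finsupp.single 0 (k - 1) + Finsupp.single 1 (ℓ - 1)) (coeff d G))
        = if (d 0 + (k - 1)) % p = p - 1 ∧ (d 1 + (ℓ - 1)) % p = p - 1 then
            monomial (e d) (coeff d G) else 0 := by
    intro d hd
    rw [nabla_monomial, happ0, happ1, cast_df p hp, cast_df p hp]
    by_cases h0 : (d 0 + (k - 1)) % p = p - 1 <;> by_cases h1 : (d 1 + (ℓ - 1)) % p = p - 1 <;>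
      simp [h0, h1, he]
  set P : (Fin 2 →₀ ℕ) → Prop :=
    fun d => (d 0 + (k - 1)) % p = p - 1 ∧ (d 1 + (ℓ - 1)) % p = p - 1 with hP
  have hL3 : nabla p (G * X 0 ^ (k - 1) * X 1 ^ (ℓ - 1))
      = ∑ d ∈ G.support.filter P, monomial (e d) (coeff d G) := by
    rw [hL2, Finset.sum_congr rfl hterm, ← Finset.sum_filter]
  -- RHS as a sum over a filtered product
  have hfij : ∀ i j, f i j
      = monomial (Finsupp.single 0 (i * p) + Finsupp.single 1 (j * p)) (coeff (dij i j) G) := by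
    intro i j
    rw [hf]; simp only
    rw [C_apply, X_pow_eq_monomial, X_pow_eq_monomial, monomial_mul, monomial_mul, mul_one,
      mul_one, zero_add]
  have hR1 : (∑ i ∈ Finset.range N, ∑ j ∈ Finset.range N, f i j)
      = ∑ q ∈ (Finset.range N ×ˢ Finset.range N).filter (fun q => dij q.1 q.2 ∈ G.support),
          monomial (Finsupp.single 0 (q.1 * p) + Finsupp.single 1 (q.2 * p))
            (coeff (dij q.1 q.2) G) := by
    rw [← Finset.sum_product']
    rw [Finset.sum_filter_of_ne]
    · exact Finset.sum_congr rfl fun q _ => hfij q.1 q.2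
    · intro q _ hq
      rw [MvPolynomial.mem_support_iff]
      intro hc
      exact hq (by rw [hc, map_zero])
  rw [hL3, hR1]
  -- the bijection
  have hdlesum : ∀ d ∈ G.support, d 0 ≤ D ∧ d 1 ≤ D := by
    intro d hd
    have := le_totalDegree hd
    exact ⟨le_trans (apply_le_sum d 0) this, le_trans (apply_le_sum d 1) this⟩
  refine Finset.sum_bij' (fun d _ => ((d 0 + k) / p - 1, (d 1 + ℓ) / p - 1))
    (fun q _ => dij q.1 q.2) ?_ ?_ ?_ ?_ ?_
  · -- maps into T
    intro d hd
    rw [Finset.mem_filter] at hd ⊢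
    obtain ⟨hds, hP0, hP1⟩ := hd
    obtain ⟨hd0, hd1⟩ := hdlesum d hds
    obtain ⟨hk0, hkN⟩ := key0 (d 0) k hk1 hkp hd0 hP0
    obtain ⟨hl0, hlN⟩ := key0 (d 1) ℓ hl1 hlp hd1 hP1
    refine ⟨Finset.mem_product.mpr ⟨Finset.mem_range.mpr hkN, Finset.mem_range.mpr hlN⟩, ?_⟩
    have heq : dij ((d 0 + k) / p - 1) ((d 1 + ℓ) / p - 1) = d := by
      have ek : ((d 0 + k) / p - 1 + 1) * p = ((d 0 + k) / p - 1) * p + p := by ring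
      have el : ((d 1 + ℓ) / p - 1 + 1) * p = ((d 1 + ℓ) / p - 1) * p + p := by ring
      ext t
      fin_cases t
      · show dij _ _ 0 = d 0
        rw [hdij0]; omega
      · show dij _ _ 1 = d 1
        rw [hdij1]; omega
    rw [heq]; exact hds
  · -- maps into S
    rintro ⟨i, j⟩ hq
    rw [Finset.mem_filter] at hq ⊢
    refine ⟨hq.2, ?_, ?_⟩
    · rw [hdij0]
      have e1 : (i + 1) * p = i * p + p := by ring
      rw [show (i + 1) * p - k + (k - 1) = p - 1 + i * p by omega, Nat.add_mul_mod_self_right,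
        Nat.mod_eq_of_lt (by omega)]
    · rw [hdij1]
      have e1 : (j + 1) * p = j * p + p := by ring
      rw [show (j + 1) * p - ℓ + (ℓ - 1) = p - 1 + j * p by omega, Nat.add_mul_mod_self_right,
        Nat.mod_eq_of_lt (by omega)]
  · -- left inverse : φ (ψ d) = d
    intro d hd
    rw [Finset.mem_filter] at hd
    obtain ⟨hds, hP0, hP1⟩ := hd
    obtain ⟨hd0, hd1⟩ := hdlesum d hds
    obtain ⟨hk0, hkN⟩ := key0 (d 0) k hk1 hkp hd0 hP0
    obtain ⟨hl0, hlN⟩ := key0 (d 1) ℓ hl1 hlp hd1 hP1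
    have heq : dij ((d 0 + k) / p - 1) ((d 1 + ℓ) / p - 1) = d := by
      have ek : ((d 0 + k) / p - 1 + 1) * p = ((d 0 + k) / p - 1) * p + p := by ring
      have el : ((d 1 + ℓ) / p - 1 + 1) * p = ((d 1 + ℓ) / p - 1) * p + p := by ring
      ext t
      fin_cases t
      · show dij _ _ 0 = d 0
        rw [hdij0]; omega
      · show dij _ _ 1 = d 1
        rw [hdij1]; omega
    exact heq
  · -- right inverse : ψ (φ q) = q
    rintro ⟨i, j⟩ hq
    simp only [hdij0, hdij1]
    have e1 : (i + 1) * p = i * p + p := by ring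
    have e2 : (j + 1) * p = j * p + p := by ring
    have h1 : (i + 1) * p - k + k = (i + 1) * p := by omega
    have h2 : (j + 1) * p - ℓ + ℓ = (j + 1) * p := by omega
    rw [h1, h2, Nat.mul_div_cancel _ (show 0 < p by omega),
      Nat.mul_div_cancel _ (show 0 < p by omega)]
    simp
  · -- values agree
    intro d hd
    rw [Finset.mem_filter] at hd
    obtain ⟨hds, hP0, hP1⟩ := hd
    obtain ⟨hd0, hd1⟩ := hdlesum d hds
    obtain ⟨hk0, hkN⟩ := key0 (d 0) k hk1 hkp hd0 hP0
    obtain ⟨hl0, hlN⟩ := key0 (d 1) ℓ hl1 hlp hd1 hP1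
    have heq : dij ((d 0 + k) / p - 1) ((d 1 + ℓ) / p - 1) = d := by
      have ek : ((d 0 + k) / p - 1 + 1) * p = ((d 0 + k) / p - 1) * p + p := by ring
      have el : ((d 1 + ℓ) / p - 1 + 1) * p = ((d 1 + ℓ) / p - 1) * p + p := by ring
      ext t
      fin_cases t
      · show dij _ _ 0 = d 0
        rw [hdij0]; omega
      · show dij _ _ 1 = d 1
        rw [hdij1]; omega
    have ek : ((d 0 + k) / p - 1 + 1) * p = ((d 0 + k) / p - 1) * p + p := by ring
    have el : ((d 1 + ℓ) / p - 1 + 1) * p = ((d 1 + ℓ) / p - 1) * p + p := by ring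
    have hexp : e d = (Finsupp.single 0 (((d 0 + k) / p - 1) * p)
        + Finsupp.single 1 (((d 1 + ℓ) / p - 1) * p) : Fin 2 →₀ ℕ) := by
      simp only [he]
      ext t
      fin_cases t <;>
        simp [Finsupp.tsub_apply, Finsupp.single_apply] <;> omega
    rw [heq, hexp]
end

section
/- Let p be a prime, let m ≥ 2 be an integer with p ∤ m, let f ∈ 𝔽_p[x], and set F(x,y) := y^m − f(x) ∈ 𝔽_p[x,y]. Let ∇ denote the operator ∂^{2p−2}/∂x^{p−1}∂y^{p−1}. Then for all integers k, ℓ with 1 ≤ k ≤ p and 1 ≤ ℓ ≤ p one has ∇(F^{p−1} · x^{k−1} y^{ℓ−1}) = ∑ f^{n_j}_{i·p−k} · x^{(i−1)·p} · y^{(j−1)·p}, where the sum is over pairs of integers i ≥ 1, j ≥ 1 such that m divides j·p − ℓ and 0 ≤ (j·p − ℓ)/m ≤ p−1, and where n_j := p − 1 − (j·p − ℓ)/m and f^n_a denotes the coefficient of x^a in f(x)^n. -/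
/-!
Over `𝔽_p`, the coefficient of `x^a` in `∂^{p-1}G/∂x^{p-1}` is `(a+1)(a+2)⋯(a+p-1)` times the
coefficient of `x^{a+p-1}` in `G`; by Wilson's theorem this product of `p - 1` consecutive integers
is `-1` when `p ∣ a` and `0` otherwise. Hence `∇G` only has monomials `x^{ip} y^{jp}`, with the
coefficient of `x^{ip+p-1} y^{jp+p-1}` in `G`. In characteristic `p` one has
`binom(p-1, t) = (-1)^t`, so `F^{p-1} = ∑_{t<p} y^{mt} f^{p-1-t}`, and the coefficient of
`y^{jp+p-1}` in `F^{p-1} x^{k-1} y^{ℓ-1}` comes from the unique `t < p` with `mt = (j+1)p - ℓ`,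
if there is one.
-/

open MvPolynomial Finset

theorem Nat.cast_choose_pred_eq_neg_one_pow {R : Type*} [Ring R] (p : ℕ) [hp : Fact p.Prime]
    [CharP R p] {t : ℕ} (ht : t < p) : ((p - 1).choose t : R) = (-1) ^ t := by
  induction t with
  | zero => simp
  | succ t ih =>
    have hsum : ((p.choose (t + 1) : ℕ) : R) = 0 :=
      (CharP.cast_eq_zero_iff R p _).2 (hp.out.dvd_choose_self t.succ_ne_zero ht)
    rw [← Nat.sub_add_cancel hp.out.one_le, Nat.choose_succ_succ', Nat.cast_add,
      ih (by omega)] at hsum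
    rw [pow_succ, mul_neg_one, eq_neg_iff_add_eq_zero, add_comm]
    exact hsum

theorem sub_pow_pred_eq_sum {R : Type*} [CommRing R] (p : ℕ) [hp : Fact p.Prime] [CharP R p]
    (a b : R) : (a - b) ^ (p - 1) = ∑ t ∈ range p, a ^ t * b ^ (p - 1 - t) := by
  have hsign : (-1 : R) ^ (p - 1) = 1 := by
    have := neg_one_pow_char R p
    rw [← Nat.sub_add_cancel hp.out.one_le, pow_succ, mul_neg_one, neg_inj] at this
    exact this
  rw [sub_pow, Nat.sub_add_cancel hp.out.one_le]
  refine sum_congr rfl fun t ht => ?_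
  rw [Nat.cast_choose_pred_eq_neg_one_pow p (mem_range.1 ht)]
  calc (-1) ^ (t + (p - 1)) * a ^ t * b ^ (p - 1 - t) * (-1) ^ t
      = ((-1) ^ t * (-1) ^ t) * (-1) ^ (p - 1) * (a ^ t * b ^ (p - 1 - t)) := by ring
    _ = a ^ t * b ^ (p - 1 - t) := by
      rw [← mul_pow, neg_one_mul, neg_neg, one_pow, hsign, one_mul, one_mul]

theorem ZMod.natCast_ascFactorial_pred (p : ℕ) [hp : Fact p.Prime] (a : ℕ) :
    ((a + 1).ascFactorial (p - 1) : ZMod p) = if p ∣ a then -1 else 0 := by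
  rw [Nat.ascFactorial_eq_prod_range, Nat.cast_prod]
  split_ifs with h
  · have ha : (a : ZMod p) = 0 := (ZMod.natCast_eq_zero_iff a p).2 h
    simp only [Nat.cast_add, ha, zero_add, Nat.cast_one]
    rw [← ZMod.wilsons_lemma, ← Finset.prod_range_add_one_eq_factorial, Nat.cast_prod]
    push_cast
    exact Finset.prod_congr rfl fun i _ => add_comm _ _
  · have hr : 0 < a % p := Nat.pos_of_ne_zero fun h0 => h (Nat.dvd_of_mod_eq_zero h0)
    have hrp : a % p < p := Nat.mod_lt _ hp.out.pos
    refine Finset.prod_eq_zero (i := p - 1 - a % p) (Finset.mem_range.2 (by omega)) ?_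
    rw [ZMod.natCast_eq_zero_iff]
    have hmul : a + 1 + (p - 1 - a % p) = p * (a / p + 1) := by
      have := Nat.div_add_mod a p
      rw [mul_add]
      omega
    exact hmul ▸ dvd_mul_right _ _

theorem Polynomial.coeff_pow_eq_zero_of_mul_natDegree_lt {R : Type*} [Semiring R]
    (f : Polynomial R) {n N e : ℕ} (hn : n ≤ N) (he : N * f.natDegree < e) :
    (f ^ n).coeff e = 0 :=
  Polynomial.coeff_eq_zero_of_natDegree_lt <|
    Polynomial.natDegree_pow_le.trans_lt <| (Nat.mul_le_mul_right _ hn).trans_lt he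

theorem Nat.le_add_one_mul_sub_div {m j p ℓ : ℕ} (hm : 0 < m) (hj : m ≤ j) (hℓ : ℓ ≤ p) :
    p ≤ ((j + 1) * p - ℓ) / m := by
  have hmp : p * m ≤ j * p := mul_comm p m ▸ Nat.mul_le_mul_right p hj
  have hsucc : (j + 1) * p = j * p + p := by ring
  exact (Nat.le_div_iff_mul_le hm).2 (by omega)

theorem Finset.sum_range_ite_mul_eq {M : Type*} [AddCommMonoid M] {m : ℕ} (hm : m ≠ 0)
    (n N : ℕ) (g : ℕ → M) :
    ∑ t ∈ range n, (if m * t = N then g t else 0)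
      = if m ∣ N ∧ N / m < n then g (N / m) else 0 := by
  by_cases hN : m ∣ N
  · obtain ⟨u, rfl⟩ := hN
    simp [Nat.mul_left_cancel_iff (Nat.pos_of_ne_zero hm), hm]
  · rw [if_neg fun h => hN h.1]
    exact sum_eq_zero fun t _ => if_neg fun h => hN ⟨t, h.symm⟩

namespace MvPolynomial

variable {R : Type*}

theorem coeff_iterate_pderiv {σ : Type*} [CommSemiring R] (i : σ) (n : ℕ)
    (q : MvPolynomial σ R) (d : σ →₀ ℕ) :
    coeff d ((pderiv i)^[n] q)
      = coeff (d + Finsupp.single i n) q * ((d i + 1).ascFactorial n : R) := by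
  induction n generalizing q with
  | zero => simp
  | succ n ih =>
    rw [Function.iterate_succ_apply, ih, coeff_pderiv, Nat.ascFactorial_succ, add_assoc,
      ← Finsupp.single_add]
    simp only [Finsupp.add_apply, Finsupp.single_eq_same]
    push_cast
    ring

theorem coeff_C_mul_X_zero_pow_mul_X_one_pow [CommSemiring R] (a : R) (u v : ℕ)
    (d : Fin 2 →₀ ℕ) :
    coeff d (C a * X 0 ^ u * X 1 ^ v) = if d 0 = u ∧ d 1 = v then a else 0 := by
  rw [X_pow_eq_monomial, X_pow_eq_monomial, C_mul_monomial, monomial_mul, coeff_monomial,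
    mul_one, mul_one]
  congr 1
  refine propext ⟨fun h => h ▸ by simp, fun ⟨h0, h1⟩ => ?_⟩
  ext i
  fin_cases i <;> simp [h0, h1]

theorem coeff_aeval_X_zero_mul_X_one_pow [CommSemiring R] (g : Polynomial R) (c : ℕ)
    (d : Fin 2 →₀ ℕ) :
    coeff d (Polynomial.aeval (X 0) g * X 1 ^ c) = if d 1 = c then g.coeff (d 0) else 0 := by
  induction g using Polynomial.induction_on' with
  | add q r hq hr =>
    rw [map_add, add_mul, coeff_add, hq, hr, Polynomial.coeff_add]
    split_ifs <;> simp
  | monomial n a =>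
    rw [Polynomial.aeval_monomial, algebraMap_eq, coeff_C_mul_X_zero_pow_mul_X_one_pow,
      Polynomial.coeff_monomial]
    by_cases h1 : d 1 = c <;> by_cases h0 : d 0 = n <;> simp [h1, h0, Ne.symm]

theorem coeff_sub_pow_pred_mul [CommRing R] (p : ℕ) [Fact p.Prime] [CharP R p] (m : ℕ)
    (f : Polynomial R) (a b : ℕ) (d : Fin 2 →₀ ℕ) :
    coeff d ((X 1 ^ m - Polynomial.aeval (X 0) f) ^ (p - 1) * X 0 ^ a * X 1 ^ b)
      = ∑ t ∈ range p,
          if d 1 = m * t + b then (f ^ (p - 1 - t) * Polynomial.X ^ a).coeff (d 0) else 0 := by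
  rw [sub_pow_pred_eq_sum p, sum_mul, sum_mul, coeff_sum]
  refine sum_congr rfl fun t _ => ?_
  rw [← coeff_aeval_X_zero_mul_X_one_pow]
  congr 1
  simp only [map_mul, map_pow, Polynomial.aeval_X]
  ring

theorem coeff_finsum_finsum_C_mul_X_zero_pow_mul_X_one_pow [CommSemiring R] {p : ℕ}
    (hp : 0 < p) (c : ℕ → ℕ → R) {I J : ℕ} (hI : ∀ i j, I ≤ i → c i j = 0)
    (hJ : ∀ i j, J ≤ j → c i j = 0) (d : Fin 2 →₀ ℕ) :
    coeff d (∑ᶠ (i) (j), C (c i j) * X 0 ^ (i * p) * X 1 ^ (j * p))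
      = if p ∣ d 0 ∧ p ∣ d 1 then c (d 0 / p) (d 1 / p) else 0 := by
  set T : ℕ → ℕ → MvPolynomial (Fin 2) R :=
    fun i j => C (c i j) * X 0 ^ (i * p) * X 1 ^ (j * p)
  have hrow : ∀ i, (Function.support (T i)).Finite := fun i =>
    (Set.finite_Iio J).subset fun j hj => by
      by_contra hJj
      exact hj (by simp [T, hJ i j (not_lt.1 hJj)])
  have hcol : (Function.support fun i => ∑ᶠ j, T i j).Finite :=
    (Set.finite_Iio I).subset fun i hi => by
      by_contra hIi
      exact hi (finsum_eq_zero_of_forall_eq_zero fun j => by simp [T, hI i j (not_lt.1 hIi)])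
  change coeffAddMonoidHom d (∑ᶠ (i) (j), T i j) = _
  rw [(coeffAddMonoidHom d).map_finsum hcol]
  simp only [coeffAddMonoidHom_apply, (coeffAddMonoidHom d).map_finsum (hrow _), T,
    coeff_C_mul_X_zero_pow_mul_X_one_pow]
  split_ifs with hd
  · obtain ⟨⟨i₀, hi₀⟩, ⟨j₀, hj₀⟩⟩ := hd
    have hij : ∀ i j, (d 0 = i * p ∧ d 1 = j * p) ↔ (i = i₀ ∧ j = j₀) := by
      simp [hi₀, hj₀, mul_comm p, hp.ne', eq_comm]
    simp only [hij, ite_and]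
    rw [finsum_eq_single _ i₀ fun i hi => by simp [hi],
      finsum_eq_single _ j₀ fun j hj => by simp [hj]]
    simp [hi₀, hj₀, hp]
  · refine finsum_eq_zero_of_forall_eq_zero fun i => finsum_eq_zero_of_forall_eq_zero fun j => ?_
    exact if_neg fun h => hd ⟨⟨i, h.1.trans (mul_comm _ _)⟩, ⟨j, h.2.trans (mul_comm _ _)⟩⟩

theorem coeff_nabla (p : ℕ) [Fact p.Prime] (q : MvPolynomial (Fin 2) (ZMod p))
    (d : Fin 2 →₀ ℕ) :
    coeff d (nabla p q)
      = if p ∣ d 0 ∧ p ∣ d 1 then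
          coeff (d + Finsupp.single 0 (p - 1) + Finsupp.single 1 (p - 1)) q
        else 0 := by
  simp only [nabla, Function.comp_apply]
  rw [coeff_iterate_pderiv, coeff_iterate_pderiv, Finsupp.add_apply,
    Finsupp.single_eq_of_ne (by decide), add_zero, ZMod.natCast_ascFactorial_pred,
    ZMod.natCast_ascFactorial_pred]
  by_cases hd : p ∣ d 0 ∧ p ∣ d 1
  · rw [if_pos hd.2, if_pos hd.1, if_pos hd, mul_neg_one, mul_neg_one, neg_neg]
  · rw [if_neg hd]
    rcases not_and_or.1 hd with h | h <;> simp [h]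

theorem coeff_sub_pow_pred_mul_at_mul_add_pred [CommRing R] (p : ℕ) [hp : Fact p.Prime]
    [CharP R p] {m : ℕ} (hm : m ≠ 0) (f : Polynomial R) {k ℓ : ℕ} (hk1 : 1 ≤ k) (hkp : k ≤ p)
    (hl1 : 1 ≤ ℓ) (hlp : ℓ ≤ p) {d : Fin 2 →₀ ℕ} {i j : ℕ} (hi : d 0 = p * i)
    (hj : d 1 = p * j) :
    coeff (d + Finsupp.single 0 (p - 1) + Finsupp.single 1 (p - 1))
        ((X 1 ^ m - Polynomial.aeval (X 0) f) ^ (p - 1) * X 0 ^ (k - 1) * X 1 ^ (ℓ - 1))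
      = if m ∣ (j + 1) * p - ℓ ∧ ((j + 1) * p - ℓ) / m ≤ p - 1 then
          (f ^ (p - 1 - ((j + 1) * p - ℓ) / m)).coeff ((i + 1) * p - k)
        else 0 := by
  rw [coeff_sub_pow_pred_mul]
  simp only [Finsupp.add_apply, Finsupp.single_eq_same,
    Finsupp.single_eq_of_ne (by decide : (0 : Fin 2) ≠ 1),
    Finsupp.single_eq_of_ne (by decide : (1 : Fin 2) ≠ 0), Nat.le_sub_one_iff_lt hp.out.pos]
  rw [← sum_range_ite_mul_eq hm p _ fun t => (f ^ (p - 1 - t)).coeff ((i + 1) * p - k)]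
  have hj' : (j + 1) * p = p * j + p := by ring
  have hi' : (i + 1) * p = p * i + p := by ring
  refine sum_congr rfl fun t _ => if_congr (by omega) ?_ rfl
  rw [Polynomial.coeff_mul_X_pow', if_pos (by omega)]
  congr 1
  omega

end MvPolynomial

theorem stmt9_general (p : ℕ) (hp : p.Prime) (m : ℕ) (hm : 2 ≤ m)
    (f : Polynomial (ZMod p)) (k ℓ : ℕ)
    (hk1 : 1 ≤ k) (hkp : k ≤ p) (hl1 : 1 ≤ ℓ) (hlp : ℓ ≤ p) :
    nabla p
        (((X 1 ^ m - Polynomial.aeval (X 0 : MvPolynomial (Fin 2) (ZMod p)) f) ^ (p - 1))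
          * X 0 ^ (k - 1) * X 1 ^ (ℓ - 1))
      = ∑ᶠ (i : ℕ) (j : ℕ),
          if m ∣ ((j + 1) * p - ℓ) ∧ ((j + 1) * p - ℓ) / m ≤ p - 1 then
            C ((f ^ (p - 1 - ((j + 1) * p - ℓ) / m)).coeff ((i + 1) * p - k))
              * X 0 ^ (i * p) * X 1 ^ (j * p)
          else 0 := by
  have : Fact p.Prime := ⟨hp⟩
  have hite : ∀ (P : Prop) [Decidable P] (a : ZMod p) (u v : ℕ),
      (if P then C a * X 0 ^ u * X 1 ^ v else 0 : MvPolynomial (Fin 2) (ZMod p))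
        = C (if P then a else 0) * X 0 ^ u * X 1 ^ v := by
    intro P _ a u v
    split_ifs <;> simp
  simp only [hite]
  ext d
  rw [coeff_nabla, coeff_finsum_finsum_C_mul_X_zero_pow_mul_X_one_pow hp.pos _
    (I := (p - 1) * f.natDegree + 1) (J := m) ?highI ?highJ]
  · refine if_ctx_congr Iff.rfl (fun ⟨⟨i, hi⟩, ⟨j, hj⟩⟩ => ?_) fun _ => rfl
    rw [coeff_sub_pow_pred_mul_at_mul_add_pred p (by omega) f hk1 hkp hl1 hlp hi hj, hi, hj,
      Nat.mul_div_cancel_left _ hp.pos, Nat.mul_div_cancel_left _ hp.pos]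
  case highI =>
    intro i j hi
    have hip : i ≤ i * p := Nat.le_mul_of_pos_right i hp.pos
    have hsucc : (i + 1) * p = i * p + p := by ring
    exact ite_eq_right_iff.2 fun _ =>
      f.coeff_pow_eq_zero_of_mul_natDegree_lt (Nat.sub_le _ _) (by omega)
  case highJ =>
    intro i j hj
    have hlarge := Nat.le_add_one_mul_sub_div (by omega) hj hlp
    exact if_neg fun ⟨_, hle⟩ => by have := hp.two_le; omega

/-- Let `p` be prime, `m ≥ 2` with `p ∤ m`, `f ∈ 𝔽_p[x]`, and
`F(x,y) := y^m − f(x)`.  For all `1 ≤ k, ℓ ≤ p` one has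
`∇(F^{p−1} · x^{k−1} y^{ℓ−1}) = ∑ f^{n_j}_{i·p−k} · x^{(i−1)·p} · y^{(j−1)·p}`,
the sum being over `i, j ≥ 1` with `m ∣ j·p − ℓ` and `0 ≤ (j·p − ℓ)/m ≤ p−1`,
where `n_j := p − 1 − (j·p − ℓ)/m` and `f^n_a` is the coefficient of `x^a` in `f^n`. -/
theorem stmt9 (p : ℕ) (hp : p.Prime) (m : ℕ) (hm : 2 ≤ m) (hpm : ¬ p ∣ m)
    (f : Polynomial (ZMod p)) (k ℓ : ℕ)
    (hk1 : 1 ≤ k) (hkp : k ≤ p) (hl1 : 1 ≤ ℓ) (hlp : ℓ ≤ p) :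
    nabla p
        (((X 1 ^ m - Polynomial.aeval (X 0 : MvPolynomial (Fin 2) (ZMod p)) f) ^ (p - 1))
          * X 0 ^ (k - 1) * X 1 ^ (ℓ - 1))
      = ∑ᶠ (i : ℕ) (j : ℕ),
          if m ∣ ((j + 1) * p - ℓ) ∧ ((j + 1) * p - ℓ) / m ≤ p - 1 then
            C ((f ^ (p - 1 - ((j + 1) * p - ℓ) / m)).coeff ((i + 1) * p - k))
              * X 0 ^ (i * p) * X 1 ^ (j * p)
          else 0 :=
  stmt9_general p hp m hm f k ℓ hk1 hkp hl1 hlp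
end

section
/- Let m ≥ 2 and d ≥ 3 be integers. Then the number of pairs of integers (i, j) with i ≥ 1, j ≥ 1 and m·i + d·j < m·d equals ((d−2)·(m−1) + m − gcd(m,d))/2. -/
private lemma stmt11_aux1 (x y : ℕ) : (¬ x < y ∧ x = y) ↔ x = y := by omega
private lemma stmt11_aux2 (x y : ℕ) : (¬ x < y ∧ ¬ x = y) ↔ y < x := by omega

/-- Let `m ≥ 2` and `d ≥ 3`.  The number of pairs of integers
`(i, j)` with `i ≥ 1`, `j ≥ 1` and `m·i + d·j < m·d` equals
`((d−2)·(m−1) + m − gcd(m,d))/2`. -/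
theorem stmt11 (m d : ℕ) (hm : 2 ≤ m) (hd : 3 ≤ d) :
    Nat.card {ij : ℕ × ℕ // 1 ≤ ij.1 ∧ 1 ≤ ij.2 ∧ m * ij.1 + d * ij.2 < m * d}
      = ((d - 2) * (m - 1) + m - Nat.gcd m d) / 2 := by
  classical
  have hm0 : 0 < m := by omega
  have hd0 : 0 < d := by omega
  set g := Nat.gcd m d with hgdef
  have hg0 : 0 < g := Nat.gcd_pos_of_pos_left d hm0
  have hgm : g ≤ m := Nat.le_of_dvd hm0 (Nat.gcd_dvd_left m d)
  obtain ⟨m', hm'⟩ := Nat.gcd_dvd_left m d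
  obtain ⟨d', hd'⟩ := Nat.gcd_dvd_right m d
  rw [← hgdef] at hm' hd'
  have hm'0 : 0 < m' := by
    rcases Nat.eq_zero_or_pos m' with h | h
    · subst h; omega
    · exact h
  have hd'0 : 0 < d' := by
    rcases Nat.eq_zero_or_pos d' with h | h
    · subst h; omega
    · exact h
  have hmq : m / g = m' := by rw [hm']; exact Nat.mul_div_cancel_left _ hg0
  have hdq : d / g = d' := by rw [hd']; exact Nat.mul_div_cancel_left _ hg0
  have hcop : Nat.Coprime m' d' := by
    have h := Nat.coprime_div_gcd_div_gcd (m := m) (n := d) (by rw [← hgdef]; exact hg0)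
    rwa [← hgdef, hmq, hdq] at h
  -- key divisibility: d ∣ m * i → d' ∣ i
  have hdvd : ∀ i : ℕ, d ∣ m * i → d' ∣ i := by
    intro i hi
    have h2 : g * d' ∣ g * (m' * i) := by
      rw [← hd', show g * (m' * i) = m * i by rw [hm']; ring]
      exact hi
    have h3 : d' ∣ m' * i := (Nat.mul_dvd_mul_iff_left hg0).mp h2
    exact Nat.Coprime.dvd_of_dvd_mul_left hcop.symm h3
  set R : Finset (ℕ × ℕ) := Finset.Icc 1 (d - 1) ×ˢ Finset.Icc 1 (m - 1) with hR
  set A := R.filter (fun p => m * p.1 + d * p.2 < m * d) with hA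
  set B := R.filter (fun p => m * p.1 + d * p.2 = m * d) with hB
  set C := R.filter (fun p => m * d < m * p.1 + d * p.2) with hC
  -- Step 1: the Nat.card equals A.card
  have hA_card : Nat.card {ij : ℕ × ℕ // 1 ≤ ij.1 ∧ 1 ≤ ij.2 ∧ m * ij.1 + d * ij.2 < m * d}
      = A.card := by
    have hset : {ij : ℕ × ℕ | 1 ≤ ij.1 ∧ 1 ≤ ij.2 ∧ m * ij.1 + d * ij.2 < m * d}
        = (A : Set (ℕ × ℕ)) := by
      ext ⟨i, j⟩
      simp only [Set.mem_setOf_eq, hA, hR, Finset.coe_filter, Finset.mem_product,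
        Finset.mem_Icc]
      constructor
      · rintro ⟨h1, h2, h3⟩
        have hdj : d ≤ d * j := Nat.le_mul_of_pos_right d h2
        have hmi : m ≤ m * i := Nat.le_mul_of_pos_right m h1
        have hi : i < d := by
          have h4 : m * i < m * d := by omega
          exact Nat.lt_of_mul_lt_mul_left h4
        have hj : j < m := by
          have hcomm : m * d = d * m := Nat.mul_comm m d
          have h4 : d * j < d * m := by omega
          exact Nat.lt_of_mul_lt_mul_left h4
        exact ⟨⟨⟨h1, by omega⟩, ⟨h2, by omega⟩⟩, h3⟩
      · rintro ⟨⟨⟨h1, _⟩, ⟨h2, _⟩⟩, h3⟩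
        exact ⟨h1, h2, h3⟩
    calc Nat.card {ij : ℕ × ℕ // 1 ≤ ij.1 ∧ 1 ≤ ij.2 ∧ m * ij.1 + d * ij.2 < m * d}
        = ({ij : ℕ × ℕ | 1 ≤ ij.1 ∧ 1 ≤ ij.2 ∧ m * ij.1 + d * ij.2 < m * d}).ncard :=
          (Nat.card_coe_set_eq _)
      _ = ((A : Set (ℕ × ℕ))).ncard := by rw [hset]
      _ = A.card := Set.ncard_coe_finset _
  -- Step 2: splitting the rectangle
  have hRsplit : A.card + (B.card + C.card) = R.card := by
    have h1 := Finset.card_filter_add_card_filter_not (s := R)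
      (p := fun p => m * p.1 + d * p.2 < m * d)
    have h2 := Finset.card_filter_add_card_filter_not
      (s := R.filter (fun p => ¬ (m * p.1 + d * p.2 < m * d)))
      (p := fun p => m * p.1 + d * p.2 = m * d)
    rw [Finset.filter_filter, Finset.filter_filter] at h2
    simp only [stmt11_aux1, stmt11_aux2] at h2
    rw [← hA] at h1
    rw [← hB, ← hC] at h2
    omega
  have hRcard : R.card = (d - 1) * (m - 1) := by
    rw [hR, Finset.card_product, Nat.card_Icc, Nat.card_Icc]
    congr 1
  -- Step 3: A.card = C.card via the reflection (i,j) ↦ (d-i, m-j)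
  have hAC : A.card = C.card := by
    apply Finset.card_bij (fun p _ => (d - p.1, m - p.2))
    · rintro ⟨i, j⟩ hp
      simp only [hA, hC, hR, Finset.mem_filter, Finset.mem_product, Finset.mem_Icc] at hp ⊢
      obtain ⟨⟨⟨hi1, hi2⟩, hj1, hj2⟩, hlt⟩ := hp
      refine ⟨⟨⟨by omega, by omega⟩, by omega, by omega⟩, ?_⟩
      have e1 : m * (d - i) = m * d - m * i := Nat.mul_sub m d i
      have e2 : d * (m - j) = d * m - d * j := Nat.mul_sub d m j
      have hmi : m * i ≤ m * d := Nat.mul_le_mul_left m (by omega)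
      have hdj : d * j ≤ d * m := Nat.mul_le_mul_left d (by omega)
      have hcomm : m * d = d * m := Nat.mul_comm m d
      omega
    · rintro ⟨i, j⟩ hp ⟨i', j'⟩ hq h
      simp only [hA, hR, Finset.mem_filter, Finset.mem_product, Finset.mem_Icc] at hp hq
      simp only [Prod.mk.injEq] at h
      obtain ⟨⟨⟨hi1, hi2⟩, hj1, hj2⟩, -⟩ := hp
      obtain ⟨⟨⟨hi1', hi2'⟩, hj1', hj2'⟩, -⟩ := hq
      simp only [Prod.mk.injEq]
      omega
    · rintro ⟨i, j⟩ hq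
      simp only [hC, hR, Finset.mem_filter, Finset.mem_product, Finset.mem_Icc] at hq
      obtain ⟨⟨⟨hi1, hi2⟩, hj1, hj2⟩, hgt⟩ := hq
      refine ⟨(d - i, m - j), ?_, ?_⟩
      · simp only [hA, hR, Finset.mem_filter, Finset.mem_product, Finset.mem_Icc]
        refine ⟨⟨⟨by omega, by omega⟩, by omega, by omega⟩, ?_⟩
        have e1 : m * (d - i) = m * d - m * i := Nat.mul_sub m d i
        have e2 : d * (m - j) = d * m - d * j := Nat.mul_sub d m j
        have hmi : m * i ≤ m * d := Nat.mul_le_mul_left m (by omega)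
        have hdj : d * j ≤ d * m := Nat.mul_le_mul_left d (by omega)
        have hcomm : m * d = d * m := Nat.mul_comm m d
        omega
      · simp only [Prod.mk.injEq]
        omega
  -- Step 4: B.card = g - 1
  have hBcard : B.card = g - 1 := by
    have himg : B = Finset.image (fun t => (d' * t, m - m' * t)) (Finset.Icc 1 (g - 1)) := by
      ext ⟨i, j⟩
      simp only [hB, hR, Finset.mem_filter, Finset.mem_product, Finset.mem_Icc,
        Finset.mem_image, Prod.mk.injEq]
      constructor
      · rintro ⟨⟨⟨hi1, hi2⟩, hj1, hj2⟩, heq⟩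
        have hdjle : d * j ≤ m * d := by omega
        have hdi : d ∣ m * i := by
          have h1 : m * i = m * d - d * j := by omega
          rw [h1]
          exact Nat.dvd_sub ⟨m, Nat.mul_comm m d⟩ ⟨j, rfl⟩
        obtain ⟨t, ht⟩ := hdvd i hdi
        subst ht
        have ht1 : 1 ≤ t := by
          rcases Nat.eq_zero_or_pos t with h | h
          · subst h; simp at hi1
          · exact h
        have htg : t ≤ g - 1 := by
          have h4 : d' * t < d' * g := by
            rw [Nat.mul_comm d' g]; omega
          have := Nat.lt_of_mul_lt_mul_left h4
          omega
        refine ⟨t, ⟨ht1, htg⟩, rfl, ?_⟩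
        have key : m * (d' * t) = d * (m' * t) := by rw [hm', hd']; ring
        have h6 : m' * t ≤ m' * (g - 1) := Nat.mul_le_mul_left m' (by omega)
        have h7 : m' * (g - 1) = m - m' := by
          rw [Nat.mul_sub, Nat.mul_one, hm', Nat.mul_comm]
        have e2 : d * (m - m' * t) = d * m - d * (m' * t) := Nat.mul_sub d m (m' * t)
        have hcomm : m * d = d * m := Nat.mul_comm m d
        have h8 : d * j = d * (m - m' * t) := by omega
        exact (Nat.eq_of_mul_eq_mul_left hd0 h8).symm
      · rintro ⟨t, ⟨ht1, htg⟩, hi, hj⟩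
        have key : m * (d' * t) = d * (m' * t) := by rw [hm', hd']; ring
        have h6 : m' * t ≤ m' * (g - 1) := Nat.mul_le_mul_left m' (by omega)
        have h7 : m' * (g - 1) = m - m' := by
          rw [Nat.mul_sub, Nat.mul_one, hm', Nat.mul_comm]
        have h6' : d' * t ≤ d' * (g - 1) := Nat.mul_le_mul_left d' (by omega)
        have h7' : d' * (g - 1) = d - d' := by
          rw [Nat.mul_sub, Nat.mul_one, hd', Nat.mul_comm]
        have ht1' : 1 ≤ d' * t := Nat.mul_pos hd'0 (by omega)
        have ht1'' : 1 ≤ m' * t := Nat.mul_pos hm'0 (by omega)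
        have e2 : d * (m - m' * t) = d * m - d * (m' * t) := Nat.mul_sub d m (m' * t)
        have hdm't : d * (m' * t) ≤ d * m := Nat.mul_le_mul_left d (by omega)
        have hcomm : m * d = d * m := Nat.mul_comm m d
        subst hi; subst hj
        refine ⟨⟨⟨by omega, by omega⟩, by omega, by omega⟩, by omega⟩
    have hinj : Set.InjOn (fun t => (d' * t, m - m' * t)) (Finset.Icc 1 (g - 1)) := by
      intro t _ s _ h
      simp only [Prod.mk.injEq] at h
      exact Nat.eq_of_mul_eq_mul_left hd'0 h.1
    rw [himg, Finset.card_image_of_injOn hinj, Nat.card_Icc]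
    omega
  -- Step 5: arithmetic
  have hkey : (d - 2) * (m - 1) + m = (d - 1) * (m - 1) + 1 := by
    zify [show 1 ≤ m by omega, show 2 ≤ d by omega, show 1 ≤ d by omega]
    ring
  rw [hA_card]
  omega
end

section
/- Let p be a prime, let m ≥ 2 be an integer with p ∤ m, and let f ∈ 𝔽_p[x] be squarefree of degree d ≥ 3. Then for every a ∈ 𝔽_p and all integers j, ℓ with 1 ≤ j ≤ μ and 1 ≤ ℓ ≤ μ one has the matrix identity B^{jℓ}[f(x+a)] · T^ℓ(a) = T^j(a) · B^{jℓ}[f(x)]. Consequently, if A[g] denotes the block matrix [B^{jℓ}[g]]_{1≤j,ℓ≤μ} and T(a) the block-diagonal matrix with diagonal blocks T^1(a), …, T^μ(a), then A[f(x+a)] = T(a) · A[f(x)] · T(−a). -/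
/-- `d_j := d − ⌊d·j/m⌋ − 1`. -/
def dBlock (m d j : ℕ) : ℕ := d - d * j / m - 1

/-- The `d_j × d_ℓ` matrix `B^{jℓ}[g]` over `𝔽_p` whose (1-indexed) `(i,k)` entry is
the coefficient of `x^{i·p−k}` in `g(x)^{n_j}` (with `n_j := p − 1 − ⌊j·p/m⌋`) when
`ℓ ≡ j·p (mod m)`, and `0` otherwise; coefficients at negative indices are `0`. -/
noncomputable def Bblock (p m d : ℕ) (g : Polynomial (ZMod p)) (j ℓ : ℕ) :
    Matrix (Fin (dBlock m d j)) (Fin (dBlock m d ℓ)) (ZMod p) :=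
  Matrix.of fun i k =>
    if ℓ % m = (j * p) % m ∧ (k : ℕ) + 1 ≤ ((i : ℕ) + 1) * p then
      (g ^ (p - 1 - j * p / m)).coeff (((i : ℕ) + 1) * p - ((k : ℕ) + 1))
    else 0

/-- The `n × n` matrix `T^j(a)` whose (1-indexed) `(i,k)` entry is
`binom(k−1, i−1)·a^{k−i}` for `i ≤ k` and `0` for `i > k`. -/
noncomputable def Tj (p : ℕ) (n : ℕ) (a : ZMod p) : Matrix (Fin n) (Fin n) (ZMod p) :=
  Matrix.of fun i k =>
    if (i : ℕ) ≤ (k : ℕ) then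
      ((k : ℕ).choose (i : ℕ) : ZMod p) * a ^ ((k : ℕ) - (i : ℕ))
    else 0

/-- The block matrix `A[g] = [B^{jℓ}[g]]_{1 ≤ j,ℓ ≤ μ}` with `μ := m − ⌊m/d⌋ − 1`,
indexed by pairs `⟨j, i⟩` with `1 ≤ j ≤ μ` and `1 ≤ i ≤ d_j` (0-indexed below). -/
noncomputable def Amat (p m d : ℕ) (g : Polynomial (ZMod p)) :
    Matrix ((j : Fin (m - m / d - 1)) × Fin (dBlock m d ((j : ℕ) + 1)))
           ((j : Fin (m - m / d - 1)) × Fin (dBlock m d ((j : ℕ) + 1))) (ZMod p) :=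
  Matrix.of fun x y => Bblock p m d g ((x.1 : ℕ) + 1) ((y.1 : ℕ) + 1) x.2 y.2

/-- The block-diagonal matrix `T(a)` with diagonal blocks `T^1(a), …, T^μ(a)`. -/
noncomputable def Tbig (p m d : ℕ) (a : ZMod p) :
    Matrix ((j : Fin (m - m / d - 1)) × Fin (dBlock m d ((j : ℕ) + 1)))
           ((j : Fin (m - m / d - 1)) × Fin (dBlock m d ((j : ℕ) + 1))) (ZMod p) :=
  Matrix.of fun x y =>
    if (x.1 : ℕ) = (y.1 : ℕ) ∧ (x.2 : ℕ) ≤ (y.2 : ℕ) then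
      ((y.2 : ℕ).choose (x.2 : ℕ) : ZMod p) * a ^ ((y.2 : ℕ) - (x.2 : ℕ))
    else 0

/-!
Write `h = g^{n_j}` and let `𝒞` be the Cartier operator on polynomials, `x^{sp+p-1} ↦ x^s` and
all other monomials `↦ 0`. With 0-based indices, the `(i, k)` entry of `B^{jℓ}[g]` is the
coefficient of `x^i` in `𝒞(x^k h)`, and `T(a)` is the matrix of `u(x) ↦ u(x + a)` on
polynomials of bounded degree. Over `𝔽_p` the operator `𝒞` commutes with `x ↦ x + a` (on the
monomials `(x + a)^r` this is Lucas' theorem), and `n_j`, `d_j` are such that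
`deg 𝒞(x^k h) < d_j`, so no truncation intervenes: the block identity is
`𝒞((x + a)^k h(x + a)) = 𝒞(x^k h)(x + a)`. Since `T^j(a) T^j(-a) = 1`, the identity for `A`
follows block by block.
-/

open Polynomial Finset

lemma succ_mul_sub_one_div_mod {p : ℕ} (hp : 0 < p) (s : ℕ) :
    ((s + 1) * p - 1) / p = s ∧ ((s + 1) * p - 1) % p = p - 1 := by
  rw [Nat.div_mod_unique hp, add_mul, one_mul, mul_comm p s]
  omega

section Cartier

variable {R : Type*} [CommRing R]

noncomputable def cartier (p : ℕ) : R[X] →ₗ[R] R[X] :=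
  lsum fun r => if r % p = p - 1 then monomial (r / p) else 0

lemma cartier_monomial (p r : ℕ) (c : R) :
    cartier p (monomial r c) = if r % p = p - 1 then monomial (r / p) c else 0 := by
  rw [cartier, lsum_apply, sum_monomial_index]
  · split_ifs <;> rfl
  · exact map_zero _

lemma coeff_cartier {p : ℕ} (hp : 0 < p) (u : R[X]) (s : ℕ) :
    (cartier p u).coeff s = u.coeff ((s + 1) * p - 1) := by
  induction u using Polynomial.induction_on' with
  | add u v hu hv => simp only [map_add, coeff_add, hu, hv]
  | monomial r c =>
    have hr : r % p = p - 1 ∧ r / p = s ↔ r = (s + 1) * p - 1 := by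
      rw [and_comm, Nat.div_mod_unique hp, add_mul, one_mul, mul_comm p s]
      omega
    rw [cartier_monomial, coeff_monomial]
    simp only [← hr]
    by_cases h : r % p = p - 1 <;> simp [h, coeff_monomial]

lemma natDegree_cartier_lt {p : ℕ} (hp : 0 < p) {u : R[X]} {D : ℕ} (hD : 0 < D)
    (hu : u.natDegree + 1 < (D + 1) * p) : (cartier p u).natDegree < D := by
  suffices (cartier p u).natDegree ≤ D - 1 by omega
  rw [natDegree_le_iff_coeff_eq_zero]
  intro s hs
  have : (D + 1) * p ≤ (s + 1) * p := Nat.mul_le_mul_right p (by omega)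
  rw [coeff_cartier hp]
  exact coeff_eq_zero_of_natDegree_lt (by omega)

lemma cartier_X_add_C_pow {p : ℕ} [Fact p.Prime] [CharP R p] {a : R} (ha : a ^ p = a) (r : ℕ) :
    cartier p ((X + C a) ^ r) = (cartier p (X ^ r)).comp (X + C a) := by
  have hp := (Fact.out : p.Prime).pos
  ext s
  obtain ⟨hdiv, hmod⟩ := succ_mul_sub_one_div_mod hp s
  have lucas : (r.choose ((s + 1) * p - 1) : R) = (r % p).choose (p - 1) * (r / p).choose s := by
    have h := Choose.choose_modEq_choose_mod_mul_choose_div_nat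
      (n := r) (k := (s + 1) * p - 1) (p := p)
    rw [hdiv, hmod] at h
    exact_mod_cast CharP.natCast_eq_natCast' R p h
  rw [coeff_cartier hp, coeff_X_add_C_pow, X_pow_eq_monomial, cartier_monomial, lucas]
  split_ifs with h
  · rw [monomial_comp, C_1, one_mul, coeff_X_add_C_pow, h, Nat.choose_self, Nat.cast_one, one_mul]
    by_cases hs : s ≤ r / p
    · have : r - ((s + 1) * p - 1) = (r / p - s) * p := by
        have := Nat.div_add_mod' r p
        have := Nat.mul_le_mul_right p hs
        rw [Nat.sub_mul, add_mul, one_mul]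
        omega
      rw [this, pow_mul', ha]
    · rw [Nat.choose_eq_zero_of_lt (by omega), Nat.cast_zero, mul_zero, mul_zero]
  · have : r % p < p - 1 := by have := Nat.mod_lt r hp; omega
    rw [Nat.choose_eq_zero_of_lt this, zero_comp, coeff_zero]
    simp
lemma cartier_comp_X_add_C {p : ℕ} [Fact p.Prime] [CharP R p] {a : R} (ha : a ^ p = a)
    (u : R[X]) : cartier p (u.comp (X + C a)) = (cartier p u).comp (X + C a) := by
  induction u using Polynomial.induction_on' with
  | add u v hu hv => rw [add_comp, map_add, hu, hv, map_add, add_comp]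
  | monomial r c =>
    rw [← C_mul_X_pow_eq_monomial, mul_comp, C_comp, X_pow_comp, ← smul_eq_C_mul,
      ← smul_eq_C_mul, map_smul, map_smul, smul_comp, cartier_X_add_C_pow ha]


lemma natDegree_X_add_C_pow_le (a : R) (k : ℕ) : ((X + C a) ^ k).natDegree ≤ k := by
  simpa using natDegree_pow_le_of_le k (natDegree_add_C.trans_le natDegree_X_le)

lemma coeff_comp_eq_sum_fin {v : R[X]} {D : ℕ} (hv : v.natDegree < D) (q : R[X]) (i : ℕ) :
    (v.comp q).coeff i = ∑ x : Fin D, v.coeff x * (q ^ (x : ℕ)).coeff i := by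
  rw [Fin.sum_univ_eq_sum_range (fun x => v.coeff x * (q ^ x).coeff i), comp,
    eval₂_eq_sum_range' C hv, finsetSum_coeff]
  simp only [coeff_C_mul]

lemma sum_fin_coeff_smul_map_X_pow_mul {M : Type*} [AddCommMonoid M] [Module R M]
    (Φ : R[X] →ₗ[R] M) {q : R[X]} {D : ℕ} (hq : q.natDegree < D) (H : R[X]) :
    ∑ x : Fin D, q.coeff x • Φ (X ^ (x : ℕ) * H) = Φ (q * H) := by
  rw [Fin.sum_univ_eq_sum_range (fun x => q.coeff x • Φ (X ^ x * H))]
  conv_rhs => rw [as_sum_range' q D hq]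
  simp only [sum_mul, map_sum, ← C_mul_X_pow_eq_monomial, ← smul_eq_C_mul, smul_mul_assoc,
    map_smul]

end Cartier

lemma Tj_apply (p n : ℕ) (a : ZMod p) (i k : Fin n) :
    Tj p n a i k = ((X + C a) ^ (k : ℕ)).coeff i := by
  rw [Tj, Matrix.of_apply, coeff_X_add_C_pow]
  split_ifs with h
  · ring
  · rw [Nat.choose_eq_zero_of_lt (by omega), Nat.cast_zero, mul_zero]

lemma Tj_mul (p n : ℕ) (a b : ZMod p) : Tj p n a * Tj p n b = Tj p n (a + b) := by
  ext i k
  simp only [Matrix.mul_apply, Tj_apply, mul_comm (((X + C a) ^ _).coeff _)]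
  rw [← coeff_comp_eq_sum_fin ((natDegree_X_add_C_pow_le b k).trans_lt k.isLt), pow_comp]
  simp [add_assoc]

lemma Tj_zero (p n : ℕ) : Tj p n 0 = 1 := by
  ext i k
  simp [Tj_apply, coeff_X_pow, Matrix.one_apply, Fin.ext_iff]

lemma Tj_mul_Tj_neg (p n : ℕ) (a : ZMod p) : Tj p n a * Tj p n (-a) = 1 := by
  rw [Tj_mul, add_neg_cancel, Tj_zero]

lemma Bblock_apply_of_mod_eq {p : ℕ} (hp : 0 < p) {m d j ℓ : ℕ} (h : ℓ % m = j * p % m)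
    (g : (ZMod p)[X]) (i : Fin (dBlock m d j)) (k : Fin (dBlock m d ℓ)) :
    Bblock p m d g j ℓ i k = (cartier p (X ^ (k : ℕ) * g ^ (p - 1 - j * p / m))).coeff i := by
  have : p ≤ ((i : ℕ) + 1) * p := Nat.le_mul_of_pos_left p (Nat.succ_pos _)
  rw [Bblock, Matrix.of_apply, coeff_cartier hp, coeff_X_pow_mul']
  simp only [h, true_and]
  exact if_congr (by omega) (by congr 1; omega) rfl

lemma Bblock_of_not_mod_eq {p m d j ℓ : ℕ} (h : ¬ ℓ % m = j * p % m) (g : (ZMod p)[X]) :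
    Bblock p m d g j ℓ = 0 := by
  ext
  simp [Bblock, h]

lemma mul_add_dBlock_lt {p m d j : ℕ} (hp : 0 < p) (hjm : j < m) (hdj : 0 < dBlock m d j)
    (hdℓ : 0 < dBlock m d (j * p % m)) :
    (p - 1 - j * p / m) * d + dBlock m d (j * p % m) < (dBlock m d j + 1) * p := by
  set q := j * p / m
  set r := j * p % m
  have hq : q < p := Nat.div_lt_of_lt_mul (Nat.mul_lt_mul_of_pos_right hjm hp)
  have key : d * j / m * p ≤ q * d + d * r / m :=
    calc d * j / m * p ≤ d * j * p / m := (Nat.le_div_iff_mul_le (by omega)).2 <| by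
          rw [mul_right_comm]; exact Nat.mul_le_mul_right _ (Nat.div_mul_le_self _ _)
      _ = (m * (q * d) + d * r) / m := by
        congr 1
        rw [mul_assoc, ← Nat.div_add_mod (j * p) m]
        ring
      _ = q * d + d * r / m := Nat.mul_add_div (by omega) _ _
  unfold dBlock at *
  generalize d * j / m = q₂ at *
  generalize d * r / m = q₃ at *
  rw [Nat.sub_sub d q₂, Nat.sub_sub d q₃] at *
  zify [Nat.le_sub_one_of_lt hq, Nat.one_le_of_lt hq, Nat.le_of_lt (Nat.lt_of_sub_pos hdj),
    Nat.le_of_lt (Nat.lt_of_sub_pos hdℓ)] at key ⊢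
  linarith

theorem Bblock_comp_X_add_C_mul_Tj {p : ℕ} [Fact p.Prime] {m d : ℕ} {g : (ZMod p)[X]}
    (hg : g.natDegree ≤ d) (a : ZMod p) {j ℓ : ℕ} (hj : j < m) (hℓ : ℓ < m) :
    Bblock p m d (g.comp (X + C a)) j ℓ * Tj p (dBlock m d ℓ) a
      = Tj p (dBlock m d j) a * Bblock p m d g j ℓ := by
  have hp := (Fact.out : p.Prime).pos
  by_cases hjℓ : ℓ % m = j * p % m
  swap
  · rw [Bblock_of_not_mod_eq hjℓ, Bblock_of_not_mod_eq hjℓ, Matrix.zero_mul, Matrix.mul_zero]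
  obtain rfl : ℓ = j * p % m := by rwa [Nat.mod_eq_of_lt hℓ] at hjℓ
  ext i k
  set u := X ^ (k : ℕ) * g ^ (p - 1 - j * p / m)
  have hu : u.natDegree + 1 < (dBlock m d j + 1) * p := by
    have hdeg : u.natDegree ≤ k + (p - 1 - j * p / m) * d :=
      natDegree_mul_le.trans (add_le_add (natDegree_X_pow_le _) (natDegree_pow_le_of_le _ hg))
    have := mul_add_dBlock_lt hp hj i.pos k.pos
    have := k.isLt
    omega
  calc _ = ∑ x : Fin (dBlock m d (j * p % m)),
          ((X + C a) ^ (k : ℕ)).coeff x • ((lcoeff (ZMod p) i).comp (cartier p))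
            (X ^ (x : ℕ) * (g.comp (X + C a)) ^ (p - 1 - j * p / m)) := by
        simp only [Matrix.mul_apply, Bblock_apply_of_mod_eq hp hjℓ, Tj_apply,
          LinearMap.comp_apply, lcoeff_apply, smul_eq_mul]
        exact sum_congr rfl fun x _ => mul_comm _ _
    _ = (cartier p (u.comp (X + C a))).coeff i := by
        rw [sum_fin_coeff_smul_map_X_pow_mul _ ((natDegree_X_add_C_pow_le a k).trans_lt k.isLt)]
        simp [u, mul_comp, pow_comp]
    _ = ((cartier p u).comp (X + C a)).coeff i := by rw [cartier_comp_X_add_C (ZMod.pow_card a)]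
    _ = ∑ x : Fin (dBlock m d j), (cartier p u).coeff x * ((X + C a) ^ (x : ℕ)).coeff i :=
        coeff_comp_eq_sum_fin (natDegree_cartier_lt hp i.pos hu) _ _
    _ = _ := by
        simp only [Matrix.mul_apply, Bblock_apply_of_mod_eq hp hjℓ, Tj_apply]
        exact sum_congr rfl fun x _ => mul_comm _ _

theorem Bblock_comp_X_add_C {p : ℕ} [Fact p.Prime] {m d : ℕ} {g : (ZMod p)[X]}
    (hg : g.natDegree ≤ d) (a : ZMod p) {j ℓ : ℕ} (hj : j < m) (hℓ : ℓ < m) :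
    Bblock p m d (g.comp (X + C a)) j ℓ
      = Tj p (dBlock m d j) a * Bblock p m d g j ℓ * Tj p (dBlock m d ℓ) (-a) := by
  rw [← Bblock_comp_X_add_C_mul_Tj hg a hj hℓ, Matrix.mul_assoc, Tj_mul_Tj_neg, Matrix.mul_one]

namespace Matrix

variable {o l α : Type*} [Fintype o] [DecidableEq o] [NonUnitalNonAssocSemiring α]
  {m' n' : o → Type*} [∀ i, Fintype (n' i)]

lemma blockDiagonal'_mul_apply (S : ∀ i, Matrix (m' i) (n' i) α) (M : Matrix (Σ i, n' i) l α)
    (i : o) (a : m' i) (y : l) :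
    (blockDiagonal' S * M) ⟨i, a⟩ y = ∑ b, S i a b * M ⟨i, b⟩ y := by
  rw [mul_apply, Fintype.sum_sigma, Finset.sum_eq_single i]
  · simp
  · intro j _ hj
    simp [blockDiagonal'_apply_ne _ _ _ (Ne.symm hj)]
  · simp

lemma mul_blockDiagonal'_apply (M : Matrix l (Σ i, n' i) α) (T : ∀ i, Matrix (n' i) (m' i) α)
    (x : l) (j : o) (b : m' j) :
    (M * blockDiagonal' T) x ⟨j, b⟩ = ∑ c, M x ⟨j, c⟩ * T j c b := by
  rw [mul_apply, Fintype.sum_sigma, Finset.sum_eq_single j]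
  · simp
  · intro i _ hi
    simp [blockDiagonal'_apply_ne _ _ _ hi]
  · simp

end Matrix

lemma Tbig_eq_blockDiagonal' (p m d : ℕ) (a : ZMod p) :
    Tbig p m d a =
      Matrix.blockDiagonal' fun j : Fin (m - m / d - 1) => Tj p (dBlock m d (j + 1)) a := by
  ext ⟨j, i⟩ ⟨ℓ, k⟩
  by_cases h : j = ℓ
  · subst h
    simp [Tbig, Tj]
  · simp [Tbig, Matrix.blockDiagonal'_apply_ne _ _ _ h, Fin.val_ne_of_ne h]

theorem stmt13_general (p m d : ℕ) (hp : p.Prime)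
    (f : Polynomial (ZMod p)) (hdeg : f.natDegree = d)
    (a : ZMod p) :
    (∀ j ℓ : ℕ, 1 ≤ j → j ≤ m - m / d - 1 → 1 ≤ ℓ → ℓ ≤ m - m / d - 1 →
      Bblock p m d (f.comp (Polynomial.X + Polynomial.C a)) j ℓ * Tj p (dBlock m d ℓ) a
        = Tj p (dBlock m d j) a * Bblock p m d f j ℓ) ∧
    Amat p m d (f.comp (Polynomial.X + Polynomial.C a))
      = Tbig p m d a * Amat p m d f * Tbig p m d (-a) := by
  have := Fact.mk hp
  have hμ : ∀ j, 1 ≤ j → j ≤ m - m / d - 1 → j < m := fun j _ _ ↦ by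
    have := Nat.sub_le m (m / d)
    omega
  refine ⟨fun j ℓ hj hjμ hℓ hℓμ ↦
    Bblock_comp_X_add_C_mul_Tj hdeg.le a (hμ j hj hjμ) (hμ ℓ hℓ hℓμ), ?_⟩
  ext ⟨j, i⟩ ⟨ℓ, k⟩
  rw [Tbig_eq_blockDiagonal', Tbig_eq_blockDiagonal', Matrix.mul_blockDiagonal'_apply]
  simp only [Matrix.blockDiagonal'_mul_apply]
  rw [Amat, Matrix.of_apply, Bblock_comp_X_add_C hdeg.le a (hμ _ (by omega) (by omega))
    (hμ _ (by omega) (by omega))]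
  simp [Matrix.mul_apply, Amat]

/-- Let `p` be prime, `m ≥ 2` with `p ∤ m`, and `f ∈ 𝔽_p[x]`
squarefree of degree `d ≥ 3`.  For every `a ∈ 𝔽_p` and all `1 ≤ j, ℓ ≤ μ` one has
`B^{jℓ}[f(x+a)] · T^ℓ(a) = T^j(a) · B^{jℓ}[f(x)]`; consequently
`A[f(x+a)] = T(a) · A[f(x)] · T(−a)`. -/
theorem stmt13 (p m d : ℕ) (hp : p.Prime) (hm : 2 ≤ m) (hpm : ¬ p ∣ m)
    (f : Polynomial (ZMod p)) (hsqf : Squarefree f) (hdeg : f.natDegree = d) (hd : 3 ≤ d)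
    (a : ZMod p) :
    (∀ j ℓ : ℕ, 1 ≤ j → j ≤ m - m / d - 1 → 1 ≤ ℓ → ℓ ≤ m - m / d - 1 →
      Bblock p m d (f.comp (Polynomial.X + Polynomial.C a)) j ℓ * Tj p (dBlock m d ℓ) a
        = Tj p (dBlock m d j) a * Bblock p m d f j ℓ) ∧
    Amat p m d (f.comp (Polynomial.X + Polynomial.C a))
      = Tbig p m d a * Amat p m d f * Tbig p m d (-a) :=
  stmt13_general p m d hp f hdeg a
end

section
/- Let p be a prime, let m ≥ 2 be an integer with p ∤ m, and let f ∈ 𝔽_p[x] be squarefree of degree d ≥ 3. Fix integers j, ℓ with 1 ≤ j, ℓ ≤ μ and pairwise distinct elements a_1, …, a_{d_j} ∈ 𝔽_p. Let V be the d_j × d_j Vandermonde matrix with (i,t) entry a_i^{t−1}, and let W be the d_j × d_ℓ matrix whose i-th row equals the first row of B^{jℓ}[f(x+a_i)] multiplied on the right by T^ℓ(a_i). Then V · B^{jℓ}[f(x)] = W; in particular V is invertible and B^{jℓ}[f(x)] = V^{−1} · W, so the block B^{jℓ}[f(x)] is determined by the first rows of the translated blocks B^{jℓ}[f(x+a_i)]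 for 1 ≤ i ≤ d_j. -/
open Polynomial Finset

/-- Special case of Lucas' theorem: `C(M, p-1) mod p` is 1 iff `M ≡ p-1 (mod p)`. -/
lemma lucas_pm1 (p : ℕ) [Fact p.Prime] (M : ℕ) :
    ((M.choose (p - 1) : ℕ) : ZMod p) = if M % p = p - 1 then 1 else 0 := by
  have hp2 := (Fact.out : p.Prime).two_le
  have h := (ZMod.intCast_eq_intCast_iff _ _ p).mpr
    (Choose.choose_modEq_choose_mod_mul_choose_div (n := M) (k := p - 1))
  have h2 : (p - 1) % p = p - 1 := Nat.mod_eq_of_lt (by omega)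
  have h3 : (p - 1) / p = 0 := Nat.div_eq_of_lt (by omega)
  rw [h2, h3] at h
  push_cast at h
  rw [h, Nat.choose_zero_right]
  split_ifs with hc
  · rw [hc, Nat.choose_self]; push_cast; ring
  · have hlt : M % p < p := Nat.mod_lt M (by omega)
    have : (M % p).choose (p - 1) = 0 := Nat.choose_eq_zero_of_lt (by omega)
    rw [this]; push_cast; ring

/-- Taylor expansion coefficients. -/
lemma coeff_comp_eq_sum {R : Type*} [CommRing R] (F : Polynomial R) (b : R) (t : ℕ) :
    (F.comp (X + C b)).coeff t
      = ∑ s ∈ Finset.range (F.natDegree + 1), (s.choose t : R) * b ^ (s - t) * F.coeff s := by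
  rw [← Polynomial.taylor_apply, Polynomial.taylor_coeff, Polynomial.hasseDeriv_apply,
    Polynomial.sum_def, Polynomial.eval_finset_sum]
  simp only [Polynomial.eval_monomial]
  rw [Finset.sum_subset (Polynomial.supp_subset_range_natDegree_succ (p := F))
    (fun x _ hx => by rw [Polynomial.notMem_support_iff.mp hx]; ring)]
  refine Finset.sum_congr rfl fun s _ => ?_
  ring

/-- Truncated Vandermonde identity in ℕ. -/
lemma vdm_trunc (p D k s : ℕ) (hp : 1 ≤ p) (hk : k < D) :
    ∑ k' ∈ Finset.range D, (if k' + 1 ≤ p then k.choose k' * s.choose (p - 1 - k') else 0)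
      = (k + s).choose (p - 1) := by
  rw [Nat.add_choose_eq, Finset.Nat.sum_antidiagonal_eq_sum_range_succ_mk,
    show (p - 1).succ = p from by omega]
  have h1 : ∑ k' ∈ Finset.range D,
        (if k' + 1 ≤ p then k.choose k' * s.choose (p - 1 - k') else 0)
      = ∑ k' ∈ Finset.range (D + p),
        (if k' + 1 ≤ p then k.choose k' * s.choose (p - 1 - k') else 0) := by
    refine Finset.sum_subset (Finset.range_subset_range.mpr (Nat.le_add_right D p)) ?_
    intro x _ hx
    simp only [Finset.mem_range, not_lt] at hx
    have hz : k.choose x = 0 := Nat.choose_eq_zero_of_lt (by omega)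
    simp [hz]
  have h3 : ∑ k' ∈ Finset.range p,
        (if k' + 1 ≤ p then k.choose k' * s.choose (p - 1 - k') else 0)
      = ∑ k' ∈ Finset.range (D + p),
        (if k' + 1 ≤ p then k.choose k' * s.choose (p - 1 - k') else 0) :=
    Finset.sum_subset (Finset.range_subset_range.mpr (Nat.le_add_left p D))
      (fun x _ hx => by simp only [Finset.mem_range, not_lt] at hx; rw [if_neg (by omega)])
  have h2 : ∑ x ∈ Finset.range p, (if x + 1 ≤ p then k.choose x * s.choose (p - 1 - x) else 0)
      = ∑ x ∈ Finset.range p, k.choose x * s.choose (p - 1 - x) := by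
    refine Finset.sum_congr rfl fun x hx => ?_
    simp only [Finset.mem_range] at hx
    rw [if_pos (by omega)]
  rw [h1, ← h3, h2]

/-- The inner sum over `k'` collapses to a single binomial coefficient. -/
lemma innerSumKey {p : ℕ} [Fact p.Prime] (a : ZMod p) (D k s : ℕ) (hk : k < D) :
    ∑ k' ∈ Finset.range D,
      ((if k' + 1 ≤ p then (s.choose (p - (k' + 1)) : ZMod p) * a ^ (s - (p - (k' + 1))) else 0)
        * (if k' ≤ k then (k.choose k' : ZMod p) * a ^ (k - k') else 0))
      = ((k + s).choose (p - 1) : ZMod p) * a ^ (s + k - (p - 1)) := by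
  have hp2 := (Fact.out : p.Prime).two_le
  have key : ∀ k' ∈ Finset.range D,
      (if k' + 1 ≤ p then (s.choose (p - (k' + 1)) : ZMod p) * a ^ (s - (p - (k' + 1))) else 0)
        * (if k' ≤ k then (k.choose k' : ZMod p) * a ^ (k - k') else 0)
      = ((if k' + 1 ≤ p then k.choose k' * s.choose (p - 1 - k') else 0 : ℕ) : ZMod p)
          * a ^ (s + k - (p - 1)) := by
    intro k' _
    by_cases h1 : k' + 1 ≤ p
    · rw [if_pos h1, if_pos h1]
      have hidx : p - (k' + 1) = p - 1 - k' := by omega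
      by_cases h2 : k' ≤ k
      · rw [if_pos h2]
        by_cases h3 : p - (k' + 1) ≤ s
        · have he : (s - (p - 1 - k')) + (k - k') = s + k - (p - 1) := by omega
          rw [hidx, ← he, pow_add]
          push_cast
          ring
        · have h4 : s.choose (p - (k' + 1)) = 0 := Nat.choose_eq_zero_of_lt (by omega)
          have h5 : s.choose (p - 1 - k') = 0 := Nat.choose_eq_zero_of_lt (by omega)
          simp [h4, h5]
      · rw [if_neg h2]
        have hz : k.choose k' = 0 := Nat.choose_eq_zero_of_lt (by omega)
        simp [hz]
    · simp [h1]
  rw [Finset.sum_congr rfl key, ← Finset.sum_mul]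
  congr 1
  rw [← Nat.cast_sum]
  exact congrArg _ (vdm_trunc p D k s (by omega) hk)

/-- Arithmetic vanishing estimate. -/
lemma vanishKey (p m d j ℓ t k : ℕ) (hp2 : 2 ≤ p) (hm : 2 ≤ m) (hd : 1 ≤ d) (hjm : j < m)
    (hℓ : j * p % m = ℓ) (ht : d - d * j / m - 1 ≤ t) (hk : k < d - d * ℓ / m - 1) :
    (p - 1 - j * p / m) * d + (k + 1) < (t + 1) * p := by
  have f2 : p * (d * j / m) ≤ (j * p / m) * d + d * ℓ / m := by
    have hle := Nat.mul_div_le_mul_div_assoc p (d * j) m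
    have he : p * (d * j) = m * ((j * p / m) * d) + d * ℓ := by
      calc p * (d * j) = d * (j * p) := by ring
        _ = d * (m * (j * p / m) + j * p % m) := by rw [Nat.div_add_mod]
        _ = d * (m * (j * p / m) + ℓ) := by rw [hℓ]
        _ = m * ((j * p / m) * d) + d * ℓ := by ring
    rw [he, Nat.mul_add_div (by omega)] at hle
    exact hle
  have f3 : j * p / m < p := by
    rw [Nat.div_lt_iff_lt_mul (show 0 < m by omega)]
    have h1 : j * p ≤ (m - 1) * p := Nat.mul_le_mul_right p (by omega)
    have h2 : (m - 1) * p + p = m * p := by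
      have hm1 : m - 1 + 1 = m := by omega
      calc (m - 1) * p + p = (m - 1 + 1) * p := by ring
        _ = m * p := by rw [hm1]
    have h3 : m * p = p * m := Nat.mul_comm m p
    omega
  have f5 : d * j / m < d := by
    rw [Nat.div_lt_iff_lt_mul (show 0 < m by omega)]
    have h1 : d * j ≤ d * (m - 1) := Nat.mul_le_mul_left d (by omega)
    have h2 : d * (m - 1) + d = d * m := by
      have hm1 : m - 1 + 1 = m := by omega
      calc d * (m - 1) + d = d * (m - 1 + 1) := by ring
        _ = d * m := by rw [hm1]
    omega
  have g1 : (d - d * j / m) * p ≤ (t + 1) * p := Nat.mul_le_mul_right p (by omega)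
  have g2 : (d - d * j / m) * p + (d * j / m) * p = d * p := by
    have h : d - d * j / m + d * j / m = d := by omega
    calc (d - d * j / m) * p + (d * j / m) * p = (d - d * j / m + d * j / m) * p := by ring
      _ = d * p := by rw [h]
  have g3 : (p - 1 - j * p / m) * d + (j * p / m) * d + d = p * d := by
    have h : (p - 1 - j * p / m) + j * p / m + 1 = p := by omega
    calc (p - 1 - j * p / m) * d + (j * p / m) * d + d
        = ((p - 1 - j * p / m) + j * p / m + 1) * d := by ring
      _ = p * d := by rw [h]
  have hc1 : d * p = p * d := Nat.mul_comm d p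
  have hc2 : (d * j / m) * p = p * (d * j / m) := Nat.mul_comm _ p
  omega

/-- Let `p` be prime, `m ≥ 2` with `p ∤ m`, `f ∈ 𝔽_p[x]` squarefree
of degree `d ≥ 3`, and fix `1 ≤ j, ℓ ≤ μ` and pairwise distinct `a_1, …, a_{d_j} ∈ 𝔽_p`.
With `V` the Vandermonde matrix `V_{it} = a_i^{t−1}` and `W` the `d_j × d_ℓ` matrix whose
`i`-th row is the first row of `B^{jℓ}[f(x+a_i)]` times `T^ℓ(a_i)`, one has
`V · B^{jℓ}[f(x)] = W`; in particular `V` is invertible and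
`B^{jℓ}[f(x)] = V⁻¹ · W`. -/
theorem stmt14 (p m d : ℕ) (hp : p.Prime) (hm : 2 ≤ m) (hpm : ¬ p ∣ m)
    (f : Polynomial (ZMod p)) (hsqf : Squarefree f) (hdeg : f.natDegree = d) (hd : 3 ≤ d)
    (j ℓ : ℕ) (hj1 : 1 ≤ j) (hj2 : j ≤ m - m / d - 1) (hl1 : 1 ≤ ℓ) (hl2 : ℓ ≤ m - m / d - 1)
    (a : Fin (dBlock m d j) → ZMod p) (ha : Function.Injective a) :
    Matrix.vandermonde a * Bblock p m d f j ℓ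
        = Matrix.of (fun i k =>
            (Bblock p m d (f.comp (Polynomial.X + Polynomial.C (a i))) j ℓ
                * Tj p (dBlock m d ℓ) (a i)) ⟨0, Fin.pos i⟩ k) ∧
    IsUnit (Matrix.vandermonde a) ∧
    Bblock p m d f j ℓ
      = (Matrix.vandermonde a)⁻¹
          * Matrix.of (fun i k =>
              (Bblock p m d (f.comp (Polynomial.X + Polynomial.C (a i))) j ℓ
                  * Tj p (dBlock m d ℓ) (a i)) ⟨0, Fin.pos i⟩ k) := by
  haveI : Fact p.Prime := ⟨hp⟩
  have hp2 := hp.two_le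
  have hd0 : 0 < d := by omega
  have hml : m - m / d - 1 ≤ m - 1 := by
    rw [Nat.sub_sub]; exact Nat.sub_le_sub_left (Nat.le_add_left 1 (m / d)) m
  have hm1 : m - 1 < m := Nat.sub_lt (by omega) one_pos
  have hℓm : ℓ < m := lt_of_le_of_lt (le_trans hl2 hml) hm1
  have hjm : j < m := lt_of_le_of_lt (le_trans hj2 hml) hm1
  have hNdeg : (f ^ (p - 1 - j * p / m)).natDegree = (p - 1 - j * p / m) * d := by
    rw [Polynomial.natDegree_pow, hdeg]
  have hmain : Matrix.vandermonde a * Bblock p m d f j ℓ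
      = Matrix.of (fun i k =>
          (Bblock p m d (f.comp (Polynomial.X + Polynomial.C (a i))) j ℓ
              * Tj p (dBlock m d ℓ) (a i)) ⟨0, Fin.pos i⟩ k) := by
    ext i k
    rw [Matrix.mul_apply, Matrix.of_apply, Matrix.mul_apply]
    by_cases hcond : ℓ % m = (j * p) % m
    · have hcondℓ : j * p % m = ℓ := by rw [← hcond, Nat.mod_eq_of_lt hℓm]
      have hkd : (k : ℕ) < d - d * ℓ / m - 1 := by
        have := k.isLt; simpa [dBlock] using this
      have hkdl : (k : ℕ) < dBlock m d ℓ := k.isLt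
      set T := (p - 1 - j * p / m) * d + (k : ℕ) + dBlock m d j + 2 with hT
      set S := T * p - (k : ℕ) with hS
      have hTp : T * 2 ≤ T * p := Nat.mul_le_mul_left T hp2
      have hp0 : 0 < p := by omega
      -- LHS computation
      have hL : ∑ t : Fin (dBlock m d j), Matrix.vandermonde a i t * Bblock p m d f j ℓ t k
          = ∑ t ∈ Finset.range T,
              (if (k : ℕ) + 1 ≤ (t + 1) * p then
                (a i) ^ t * (f ^ (p - 1 - j * p / m)).coeff ((t + 1) * p - ((k : ℕ) + 1))
              else 0) := by
        have step1 : ∑ t : Fin (dBlock m d j), Matrix.vandermonde a i t * Bblock p m d f j ℓ t k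
            = ∑ t ∈ Finset.range (dBlock m d j),
                (if (k : ℕ) + 1 ≤ (t + 1) * p then
                  (a i) ^ t * (f ^ (p - 1 - j * p / m)).coeff ((t + 1) * p - ((k : ℕ) + 1))
                else 0) := by
          rw [← Fin.sum_univ_eq_sum_range (fun t =>
            (if (k : ℕ) + 1 ≤ (t + 1) * p then
              (a i) ^ t * (f ^ (p - 1 - j * p / m)).coeff ((t + 1) * p - ((k : ℕ) + 1))
            else 0)) (dBlock m d j)]
          refine Finset.sum_congr rfl fun t _ => ?_
          simp only [Matrix.vandermonde_apply, Bblock, Matrix.of_apply, hcond,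
            eq_self_iff_true, true_and]
          rw [mul_ite, mul_zero]
        rw [step1]
        refine Finset.sum_subset (Finset.range_subset_range.mpr (by omega)) ?_
        intro t _ htT
        simp only [Finset.mem_range, not_lt] at htT
        split_ifs with hg
        · rw [Polynomial.coeff_eq_zero_of_natDegree_lt, mul_zero]
          rw [hNdeg]
          have hv := vanishKey p m d j ℓ t (k : ℕ) hp2 hm (by omega) hjm hcondℓ
            (by simpa [dBlock] using htT) hkd
          omega
        · rfl
      -- RHS computation
      have hR : ∑ k' : Fin (dBlock m d ℓ),
            Bblock p m d (f.comp (X + C (a i))) j ℓ ⟨0, Fin.pos i⟩ k'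
              * Tj p (dBlock m d ℓ) (a i) k' k
          = ∑ t ∈ Finset.range T,
              (if (k : ℕ) + 1 ≤ (t + 1) * p then
                (a i) ^ t * (f ^ (p - 1 - j * p / m)).coeff ((t + 1) * p - ((k : ℕ) + 1))
              else 0) := by
        calc ∑ k' : Fin (dBlock m d ℓ),
              Bblock p m d (f.comp (X + C (a i))) j ℓ ⟨0, Fin.pos i⟩ k'
                * Tj p (dBlock m d ℓ) (a i) k' k
            = ∑ k' ∈ Finset.range (dBlock m d ℓ),
                ((if k' + 1 ≤ p then
                    ((f ^ (p - 1 - j * p / m)).comp (X + C (a i))).coeff (p - (k' + 1))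
                  else 0)
                  * (if k' ≤ (k : ℕ) then ((k : ℕ).choose k' : ZMod p) * (a i) ^ ((k : ℕ) - k')
                    else 0)) := by
              rw [← Fin.sum_univ_eq_sum_range (fun k' =>
                ((if k' + 1 ≤ p then
                    ((f ^ (p - 1 - j * p / m)).comp (X + C (a i))).coeff (p - (k' + 1))
                  else 0)
                  * (if k' ≤ (k : ℕ) then ((k : ℕ).choose k' : ZMod p) * (a i) ^ ((k : ℕ) - k')
                    else 0))) (dBlock m d ℓ)]
              refine Finset.sum_congr rfl fun k' _ => ?_
              simp only [Bblock, Tj, Matrix.of_apply, hcond, eq_self_iff_true, true_and,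
                zero_add, one_mul]
              rw [← Polynomial.pow_comp]
          _ = ∑ k' ∈ Finset.range (dBlock m d ℓ),
                ((if k' + 1 ≤ p then
                    ∑ s ∈ Finset.range ((p - 1 - j * p / m) * d + 1),
                      (s.choose (p - (k' + 1)) : ZMod p) * (a i) ^ (s - (p - (k' + 1)))
                        * (f ^ (p - 1 - j * p / m)).coeff s
                  else 0)
                  * (if k' ≤ (k : ℕ) then ((k : ℕ).choose k' : ZMod p) * (a i) ^ ((k : ℕ) - k')
                    else 0)) := by
              refine Finset.sum_congr rfl fun k' _ => ?_
              by_cases h1 : k' + 1 ≤ p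
              · rw [if_pos h1, if_pos h1, coeff_comp_eq_sum, hNdeg]
              · rw [if_neg h1, if_neg h1]
          _ = ∑ k' ∈ Finset.range (dBlock m d ℓ),
                ∑ s ∈ Finset.range ((p - 1 - j * p / m) * d + 1),
                  ((if k' + 1 ≤ p then
                      (s.choose (p - (k' + 1)) : ZMod p) * (a i) ^ (s - (p - (k' + 1)))
                    else 0)
                    * (if k' ≤ (k : ℕ) then ((k : ℕ).choose k' : ZMod p) * (a i) ^ ((k : ℕ) - k')
                      else 0)) * (f ^ (p - 1 - j * p / m)).coeff s := by
              refine Finset.sum_congr rfl fun k' _ => ?_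
              by_cases h1 : k' + 1 ≤ p
              · rw [if_pos h1, Finset.sum_mul]
                refine Finset.sum_congr rfl fun s _ => ?_
                rw [if_pos h1]
                ring
              · rw [if_neg h1, zero_mul]
                symm
                refine Finset.sum_eq_zero fun s _ => ?_
                rw [if_neg h1, zero_mul, zero_mul]
          _ = ∑ s ∈ Finset.range ((p - 1 - j * p / m) * d + 1),
                (∑ k' ∈ Finset.range (dBlock m d ℓ),
                  ((if k' + 1 ≤ p then
                      (s.choose (p - (k' + 1)) : ZMod p) * (a i) ^ (s - (p - (k' + 1)))
                    else 0)
                    * (if k' ≤ (k : ℕ) then ((k : ℕ).choose k' : ZMod p) * (a i) ^ ((k : ℕ) - k')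
                      else 0))) * (f ^ (p - 1 - j * p / m)).coeff s := by
              rw [Finset.sum_comm]
              exact Finset.sum_congr rfl fun s _ => (Finset.sum_mul _ _ _).symm
          _ = ∑ s ∈ Finset.range ((p - 1 - j * p / m) * d + 1),
                (if ((k : ℕ) + s) % p = p - 1 then
                  (a i) ^ (s + (k : ℕ) - (p - 1)) * (f ^ (p - 1 - j * p / m)).coeff s
                else 0) := by
              refine Finset.sum_congr rfl fun s _ => ?_
              rw [innerSumKey (a i) (dBlock m d ℓ) (k : ℕ) s hkdl, lucas_pm1]
              split_ifs with h
              · rw [one_mul]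
              · rw [zero_mul, zero_mul]
          _ = ∑ s ∈ Finset.range S,
                (if ((k : ℕ) + s) % p = p - 1 then
                  (a i) ^ (s + (k : ℕ) - (p - 1)) * (f ^ (p - 1 - j * p / m)).coeff s
                else 0) := by
              refine Finset.sum_subset (Finset.range_subset_range.mpr (by omega)) ?_
              intro s _ hs
              simp only [Finset.mem_range, not_lt] at hs
              split_ifs with h
              · rw [Polynomial.coeff_eq_zero_of_natDegree_lt (by rw [hNdeg]; omega), mul_zero]
              · rfl
          _ = ∑ t ∈ Finset.range T,
                (if (k : ℕ) + 1 ≤ (t + 1) * p then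
                  (a i) ^ t * (f ^ (p - 1 - j * p / m)).coeff ((t + 1) * p - ((k : ℕ) + 1))
                else 0) := by
              rw [← Finset.sum_filter, ← Finset.sum_filter]
              refine Finset.sum_bij' (fun s _ => (s + (k : ℕ) + 1) / p - 1)
                (fun t _ => (t + 1) * p - ((k : ℕ) + 1)) ?_ ?_ ?_ ?_ ?_
              · intro s hs
                simp only [Finset.mem_filter, Finset.mem_range] at hs ⊢
                obtain ⟨hsS, hsmod⟩ := hs
                have hdm := Nat.div_add_mod ((k : ℕ) + s) p
                have hmul : p * (((k : ℕ) + s) / p + 1) = p * (((k : ℕ) + s) / p) + p := by ring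
                have hce : s + (k : ℕ) + 1 = p * (((k : ℕ) + s) / p + 1) := by omega
                have hdiv : (s + (k : ℕ) + 1) / p = ((k : ℕ) + s) / p + 1 := by
                  rw [hce, Nat.mul_div_cancel_left _ hp0]
                have hcT : ((k : ℕ) + s) / p + 1 ≤ T := by
                  have h2 : T * p = p * T := Nat.mul_comm T p
                  have h1 : p * (((k : ℕ) + s) / p + 1) ≤ p * T := by omega
                  exact Nat.le_of_mul_le_mul_left h1 hp0
                constructor
                · rw [hdiv]; omega
                · rw [hdiv]
                  have : (((k : ℕ) + s) / p + 1 - 1 + 1) * p = p * (((k : ℕ) + s) / p + 1) := by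
                    rw [Nat.mul_comm]; congr 1 <;> omega
                  omega
              · intro t ht
                simp only [Finset.mem_filter, Finset.mem_range] at ht ⊢
                obtain ⟨htT, htg⟩ := ht
                have hmul : (t + 1) * p = p * t + p := by ring
                constructor
                · have h1 : (t + 1) * p ≤ T * p := Nat.mul_le_mul_right p (by omega)
                  omega
                · rw [show (k : ℕ) + ((t + 1) * p - ((k : ℕ) + 1)) = p * t + (p - 1) from by omega,
                    Nat.mul_add_mod, Nat.mod_eq_of_lt (by omega)]
              · intro s hs
                simp only [Finset.mem_filter, Finset.mem_range] at hs
                obtain ⟨hsS, hsmod⟩ := hs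
                have hdm := Nat.div_add_mod ((k : ℕ) + s) p
                have hmul : p * (((k : ℕ) + s) / p + 1) = p * (((k : ℕ) + s) / p) + p := by ring
                have hce : s + (k : ℕ) + 1 = p * (((k : ℕ) + s) / p + 1) := by omega
                have hdiv : (s + (k : ℕ) + 1) / p = ((k : ℕ) + s) / p + 1 := by
                  rw [hce, Nat.mul_div_cancel_left _ hp0]
                rw [hdiv]
                have : (((k : ℕ) + s) / p + 1 - 1 + 1) * p = p * (((k : ℕ) + s) / p + 1) := by
                  rw [Nat.mul_comm]; congr 1 <;> omega
                omega
              · intro t ht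
                simp only [Finset.mem_filter, Finset.mem_range] at ht
                obtain ⟨htT, htg⟩ := ht
                have hmul : (t + 1) * p = p * (t + 1) := Nat.mul_comm _ p
                rw [show (t + 1) * p - ((k : ℕ) + 1) + (k : ℕ) + 1 = p * (t + 1) from by omega,
                  Nat.mul_div_cancel_left _ hp0]
                omega
              · intro s hs
                simp only [Finset.mem_filter, Finset.mem_range] at hs
                obtain ⟨hsS, hsmod⟩ := hs
                have hdm := Nat.div_add_mod ((k : ℕ) + s) p
                have hmul : p * (((k : ℕ) + s) / p + 1) = p * (((k : ℕ) + s) / p) + p := by ring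
                have hce : s + (k : ℕ) + 1 = p * (((k : ℕ) + s) / p + 1) := by omega
                have hdiv : (s + (k : ℕ) + 1) / p = ((k : ℕ) + s) / p + 1 := by
                  rw [hce, Nat.mul_div_cancel_left _ hp0]
                rw [hdiv]
                have hidx : (((k : ℕ) + s) / p + 1 - 1 + 1) * p - ((k : ℕ) + 1) = s := by
                  have : (((k : ℕ) + s) / p + 1 - 1 + 1) * p = p * (((k : ℕ) + s) / p + 1) := by
                    rw [Nat.mul_comm]; congr 1 <;> omega
                  omega
                have hexp : s + (k : ℕ) - (p - 1) = (((k : ℕ) + s) / p + 1 - 1) * p := by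
                  have : (((k : ℕ) + s) / p + 1 - 1) * p = p * (((k : ℕ) + s) / p) := by
                    rw [Nat.add_sub_cancel, Nat.mul_comm]
                  omega
                rw [hidx, hexp, pow_mul, ZMod.pow_card]
      rw [hL, hR]
    · simp [Bblock, hcond]
  have hdet : IsUnit (Matrix.vandermonde a).det :=
    isUnit_iff_ne_zero.mpr (Matrix.det_vandermonde_ne_zero_iff.mpr ha)
  refine ⟨hmain, (Matrix.isUnit_iff_isUnit_det _).mpr hdet, ?_⟩
  haveI := Matrix.invertibleOfIsUnitDet _ hdet
  rw [← hmain, Matrix.inv_mul_cancel_left_of_invertible]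
end

section
/- Let p be a prime, let m ≥ 2 and d ≥ 3 be integers with p ∤ m, let j be an integer with 1 ≤ j ≤ m−1, and set ℓ := j·p rem m. Define n_j := p − 1 − ⌊j·p/m⌋, d_j := d − ⌊d·j/m⌋ − 1, and d_ℓ := d − ⌊d·ℓ/m⌋ − 1. Then d·n_j − d_j·p + d_ℓ = p − 1 − ⌊((d·j) rem m)·p/m⌋. -/
/- Both `(d·j mod m)·p` and `d·(j·p mod m)` are congruent to `d·j·p` modulo `m`, so their floors
after division by `m` differ by the exact quotient `d·⌊jp/m⌋ − ⌊dj/m⌋·p`. -/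
theorem Int.emod_mul_ediv_eq (d j p m : ℤ) (hm : m ≠ 0) :
    (d * j % m) * p / m = d * (j * p / m) - d * j / m * p + d * (j * p % m) / m := by
  have h : (d * j % m) * p = d * (j * p % m) + m * (d * (j * p / m) - d * j / m * p) := by
    rw [Int.emod_def, Int.emod_def]; ring
  rw [h, Int.add_mul_ediv_left _ _ hm]
  ring

theorem Nat.mul_div_lt_right {a b m : ℕ} (hb : 0 < b) (ha : a < m) : a * b / m < b :=
  Nat.div_lt_of_lt_mul (Nat.mul_lt_mul_of_pos_right ha hb)

theorem Nat.cast_sub_sub_one {a b : ℕ} (h : a < b) : ((b - a - 1 : ℕ) : ℤ) = b - a - 1 := by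
  omega

theorem stmt16_general (p m d j : ℕ) (hp : p.Prime) (hm : 2 ≤ m) (hd : 3 ≤ d)
    (hj2 : j ≤ m - 1) :
    (d : ℤ) * ((p - 1 - j * p / m : ℕ) : ℤ)
        - ((d - d * j / m - 1 : ℕ) : ℤ) * (p : ℤ)
        + ((d - d * (j * p % m) / m - 1 : ℕ) : ℤ)
      = (p : ℤ) - 1 - (((d * j % m) * p / m : ℕ) : ℤ) := by
  have hjm : j < m := by omega
  have hd0 : 0 < d := by omega
  rw [Nat.sub_right_comm p, Nat.cast_sub_sub_one (Nat.mul_div_lt_right hp.pos hjm),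
    Nat.cast_sub_sub_one (mul_comm d j ▸ Nat.mul_div_lt_right hd0 hjm),
    Nat.cast_sub_sub_one (mul_comm d _ ▸ Nat.mul_div_lt_right hd0 (Nat.mod_lt _ (by omega)))]
  push_cast
  rw [Int.emod_mul_ediv_eq _ _ _ _ (by omega)]
  ring

/-- Let `p` be prime, `m ≥ 2`, `d ≥ 3` with `p ∤ m`, `1 ≤ j ≤ m−1`,
and set `ℓ := j·p rem m`, `n_j := p − 1 − ⌊j·p/m⌋`, `d_j := d − ⌊d·j/m⌋ − 1`, and
`d_ℓ := d − ⌊d·ℓ/m⌋ − 1`.  Then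
`d·n_j − d_j·p + d_ℓ = p − 1 − ⌊((d·j) rem m)·p/m⌋`. -/
theorem stmt16 (p m d j : ℕ) (hp : p.Prime) (hm : 2 ≤ m) (hd : 3 ≤ d) (hpm : ¬ p ∣ m)
    (hj1 : 1 ≤ j) (hj2 : j ≤ m - 1) :
    (d : ℤ) * ((p - 1 - j * p / m : ℕ) : ℤ)
        - ((d - d * j / m - 1 : ℕ) : ℤ) * (p : ℤ)
        + ((d - d * (j * p % m) / m - 1 : ℕ) : ℤ)
      = (p : ℤ) - 1 - (((d * j % m) * p / m : ℕ) : ℤ) :=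
  stmt16_general p m d j hp hm hd hj2
end
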